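/- arXiv:1203.4020 — 7 statements merged into one kernel-verified Lean document; each statement's English description precedes it below -/
import Mathlib

section
/- There exists a function c₁ : (0,∞) → (0,∞) with c₁(β) → 0 as β → ∞ such that for every β > 0 and every x ∈ [0,∞) with |x − 1| ≥ β, one has |x − 1| ≤ c₁(β)·l(x), where l(x) = x·log x − x + 1. -/
/-! `ell` is Mathlib's `klFun`: convex on `[0, ∞)` and vanishing only at `1`, so its secant slope
through `(1, 0)` increases as `x` moves away from `1`. Hence on `{x ≥ 0 | |x - 1| ≥ β}` the ratio
`|x - 1| / ell x` is at most its value at `1 + β` (and at `1 - β` when `β ≤ 1`), and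
`β / ell (1 + β) → 0` because `ell` grows like `x log x`. -/

/-- `l(r) = r·log r − r + 1` (note `Real.log 0 = 0` in Mathlib, so `ell 0 = 1`). -/
noncomputable def ell (r : ℝ) : ℝ := r * Real.log r - r + 1

open Filter Real InformationTheory

lemma ell_eq_klFun : ell = klFun := by
  funext x
  rw [ell, klFun_apply]
  ring

lemma convexOn_ell : ConvexOn ℝ (Set.Ici 0) ell := ell_eq_klFun ▸ convexOn_klFun

lemma ell_one : ell 1 = 0 := ell_eq_klFun ▸ klFun_one

lemma ell_nonneg {x : ℝ} (hx : 0 ≤ x) : 0 ≤ ell x := ell_eq_klFun ▸ klFun_nonneg hx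

lemma ell_pos {x : ℝ} (hx : 0 ≤ x) (hx₁ : x ≠ 1) : 0 < ell x := by
  rw [ell_eq_klFun]
  exact (klFun_nonneg hx).lt_of_ne' ((klFun_eq_zero_iff hx).not.mpr hx₁)

lemma sub_one_le_div_ell_mul_ell {β x : ℝ} (hβ : 0 < β) (hx : 1 + β ≤ x) :
    x - 1 ≤ β / ell (1 + β) * ell x := by
  have hslope := convexOn_ell.secant_mono (a := 1) (by simp) (Set.mem_Ici.mpr (by linarith))
    (Set.mem_Ici.mpr (by linarith)) (by linarith) (by linarith) hx
  rw [ell_one, sub_zero, sub_zero, add_sub_cancel_left,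
    div_le_div_iff₀ hβ (by linarith)] at hslope
  rw [div_mul_eq_mul_div, le_div_iff₀ (ell_pos (by linarith) (by linarith))]
  linarith

lemma one_sub_le_div_ell_mul_ell {β x : ℝ} (hβ : 0 < β) (hx₀ : 0 ≤ x) (hx : x ≤ 1 - β) :
    1 - x ≤ β / ell (1 - β) * ell x := by
  have hslope := convexOn_ell.secant_mono (a := 1) (by simp) hx₀ (Set.mem_Ici.mpr (by linarith))
    (by linarith) (by linarith) hx
  rw [ell_one, sub_zero, sub_zero, sub_sub_cancel_left, div_neg, ← neg_div_neg_eq, neg_sub,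
    le_neg, neg_div, neg_neg, div_le_div_iff₀ hβ (by linarith)] at hslope
  rw [div_mul_eq_mul_div, le_div_iff₀ (ell_pos (by linarith) (by linarith))]
  linarith

lemma tendsto_div_ell_one_add_atTop : Tendsto (fun β ↦ β / ell (1 + β)) atTop (nhds 0) := by
  have hlog : Tendsto (fun β ↦ log (1 + β) - 1) atTop atTop :=
    tendsto_atTop_add_const_right _ _
      (tendsto_log_atTop.comp (tendsto_atTop_add_const_left _ 1 tendsto_id))
  have hslope : Tendsto (fun β ↦ ell (1 + β) / β) atTop atTop := by
    refine tendsto_atTop_mono' _ ?_ hlog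
    filter_upwards [eventually_gt_atTop 0] with β hβ
    rw [le_div_iff₀ hβ, ell]
    nlinarith [log_nonneg (by linarith : (1 : ℝ) ≤ 1 + β)]
  simpa only [Pi.inv_def, inv_div] using hslope.inv_tendsto_atTop

/-- The left-hand term is dropped for `β > 1`, where no `x ≥ 0` has `1 - x ≥ β` (and `ell (1 - β)`
would be evaluated at a negative point). -/
noncomputable def ellBound (β : ℝ) : ℝ :=
  β / ell (1 + β) + if β ≤ 1 then β / ell (1 - β) else 0

lemma ellBound_pos {β : ℝ} (hβ : 0 < β) : 0 < ellBound β := by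
  have hright : 0 < β / ell (1 + β) := div_pos hβ (ell_pos (by linarith) (by linarith))
  have hleft : 0 ≤ if β ≤ 1 then β / ell (1 - β) else 0 := by
    split_ifs with hβ₁
    · exact div_nonneg hβ.le (ell_nonneg (by linarith))
    · rfl
  exact add_pos_of_pos_of_nonneg hright hleft

lemma tendsto_ellBound_atTop : Tendsto ellBound atTop (nhds 0) := by
  refine tendsto_div_ell_one_add_atTop.congr' ?_
  filter_upwards [eventually_gt_atTop 1] with β hβ
  rw [ellBound, if_neg hβ.not_ge, add_zero]

lemma abs_sub_one_le_ellBound_mul_ell {β x : ℝ} (hβ : 0 < β) (hx : 0 ≤ x) (hxβ : β ≤ |x - 1|) :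
    |x - 1| ≤ ellBound β * ell x := by
  rw [ellBound, add_mul]
  rcases le_or_gt x 1 with hx₁ | hx₁
  · rw [abs_of_nonpos (by linarith), neg_sub] at hxβ ⊢
    rw [if_pos (by linarith)]
    have hright : 0 ≤ β / ell (1 + β) * ell x :=
      mul_nonneg (div_nonneg hβ.le (ell_nonneg (by linarith))) (ell_nonneg hx)
    linarith [one_sub_le_div_ell_mul_ell hβ hx (by linarith)]
  · rw [abs_of_pos (by linarith)] at hxβ ⊢
    have hright := sub_one_le_div_ell_mul_ell hβ (by linarith : 1 + β ≤ x)
    split_ifs with hβ₁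
    · have hleft : 0 ≤ β / ell (1 - β) * ell x :=
        mul_nonneg (div_nonneg hβ.le (ell_nonneg (by linarith))) (ell_nonneg hx)
      linarith
    · linarith

/-- There exists `c₁ : (0,∞) → (0,∞)` with `c₁(β) → 0` as `β → ∞`
such that for every `β > 0` and every `x ∈ [0,∞)` with `|x − 1| ≥ β`,
`|x − 1| ≤ c₁(β)·l(x)`. -/
theorem exists_c1_abs_sub_one_le_mul_ell :
    ∃ c₁ : ℝ → ℝ, (∀ β : ℝ, 0 < β → 0 < c₁ β) ∧
      Filter.Tendsto c₁ Filter.atTop (nhds 0) ∧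
      ∀ β : ℝ, 0 < β → ∀ x : ℝ, 0 ≤ x → β ≤ |x - 1| → |x - 1| ≤ c₁ β * ell x :=
  ⟨ellBound, fun _ ↦ ellBound_pos, tendsto_ellBound_atTop,
    fun _ hβ _ hx hxβ ↦ abs_sub_one_le_ellBound_mul_ell hβ hx hxβ⟩
end

section
/- Let (Z, 𝒵, μ) be a σ-finite measure space, let h : Z → [0,∞) be measurable with ∫_Z h² dμ < ∞, and suppose there exists δ₁ ∈ (0,∞) such that ∫_E e^{δ₁·h(z)²} μ(dz) < ∞ for every measurable set E with μ(E) < ∞. Then for every M ∈ ℕ, the supremum over all g ∈ S^M of ∫_Z h(z)²·(g(z) + 1) μ(dz) is finite; that is, sup_{g ∈ S^M} ∫_Z h²·(g+1) dμ < ∞. -/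
/-!
Young's inequality for the conjugate pair `exp(a) - 1` and `ell` gives pointwise
`h² g ≤ δ⁻¹ (exp(δ h²) - 1) + δ⁻¹ ell(g)`, so the integral in question is at most
`∫ h² + δ⁻¹ (∫ (exp(δ h²) - 1) + M)`, uniformly over `S^M`. The middle integral is finite:
on `{h² ≥ 1}`, a set of finite measure by Markov's inequality, it is controlled by the
exponential integrability hypothesis, and on `{h² < 1}` convexity of `exp` bounds the
integrand by `(exp δ - 1) h²`.
-/

open MeasureTheory
open scoped ENNReal

open Real

lemma mul_le_exp_sub_one_add_ell (a : ℝ) {b : ℝ} (hb : 0 ≤ b) :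
    a * b ≤ exp a - 1 + ell b := by
  rcases hb.eq_or_lt with rfl | hb
  · simp [ell, (exp_pos a).le]
  · have h := mul_le_mul_of_nonneg_left (add_one_le_exp (a - log b)) hb.le
    rw [exp_sub, exp_log hb, mul_div_cancel₀ _ hb.ne'] at h
    unfold ell
    linarith

lemma exp_mul_sub_one_le (δ : ℝ) {x : ℝ} (hx₀ : 0 ≤ x) (hx₁ : x ≤ 1) :
    exp (δ * x) - 1 ≤ (exp δ - 1) * x := by
  have h := convexOn_exp.2 (Set.mem_univ 0) (Set.mem_univ δ) (sub_nonneg.2 hx₁) hx₀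
    (sub_add_cancel 1 x)
  simp only [smul_eq_mul, mul_zero, zero_add, exp_zero, mul_one] at h
  rw [mul_comm x δ] at h
  linarith

section

variable {Z : Type*} [MeasurableSpace Z] {μ : Measure Z} {f : Z → ℝ}

lemma measure_one_le_lt_top (hf : Measurable f) (hfin : ∫⁻ z, ENNReal.ofReal (f z) ∂μ < ⊤) :
    μ {z | 1 ≤ f z} < ⊤ := by
  have h := mul_meas_ge_le_lintegral hf.ennreal_ofReal (μ := μ) 1
  simp only [one_mul, ENNReal.one_le_ofReal] at h
  exact h.trans_lt hfin

lemma lintegral_exp_mul_sub_one_lt_top (hf : Measurable f) (hf₀ : ∀ z, 0 ≤ f z)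
    (hfin : ∫⁻ z, ENNReal.ofReal (f z) ∂μ < ⊤) {δ : ℝ}
    (hexp : ∀ E : Set Z, MeasurableSet E → μ E < ⊤ →
      ∫⁻ z in E, ENNReal.ofReal (exp (δ * f z)) ∂μ < ⊤) :
    ∫⁻ z, ENNReal.ofReal (exp (δ * f z) - 1) ∂μ < ⊤ := by
  set E := {z | 1 ≤ f z}
  have hE : MeasurableSet E := measurableSet_le measurable_const hf
  have hpt : ∀ z, ENNReal.ofReal (exp (δ * f z) - 1) ≤
      E.indicator (fun z => ENNReal.ofReal (exp (δ * f z))) z +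
        ENNReal.ofReal (exp δ - 1) * ENNReal.ofReal (f z) := by
    intro z
    by_cases hz : z ∈ E
    · rw [Set.indicator_of_mem hz]
      exact le_add_right (ENNReal.ofReal_le_ofReal (sub_le_self _ zero_le_one))
    · rw [Set.indicator_of_notMem hz, zero_add, ← ENNReal.ofReal_mul' (hf₀ z)]
      exact ENNReal.ofReal_le_ofReal (exp_mul_sub_one_le δ (hf₀ z) (not_le.1 hz).le)
  calc ∫⁻ z, ENNReal.ofReal (exp (δ * f z) - 1) ∂μ
      ≤ ∫⁻ z, (E.indicator (fun z => ENNReal.ofReal (exp (δ * f z))) z +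
          ENNReal.ofReal (exp δ - 1) * ENNReal.ofReal (f z)) ∂μ := lintegral_mono hpt
    _ = ∫⁻ z, E.indicator (fun z => ENNReal.ofReal (exp (δ * f z))) z ∂μ +
          ENNReal.ofReal (exp δ - 1) * ∫⁻ z, ENNReal.ofReal (f z) ∂μ := by
      rw [lintegral_add_right _ (hf.ennreal_ofReal.const_mul _),
        lintegral_const_mul' _ _ ENNReal.ofReal_ne_top]
    _ < ⊤ := ENNReal.add_lt_top.2
      ⟨(lintegral_indicator_le _ _).trans_lt (hexp E hE (measure_one_le_lt_top hf hfin)),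
        ENNReal.mul_lt_top ENNReal.ofReal_lt_top hfin⟩

lemma lintegral_mul_add_one_le (hf : Measurable f) {g : Z → ℝ} (hg₀ : ∀ z, 0 ≤ g z)
    {δ : ℝ} (hδ : 0 < δ) :
    ∫⁻ z, ENNReal.ofReal (f z * (g z + 1)) ∂μ ≤ ∫⁻ z, ENNReal.ofReal (f z) ∂μ +
      ENNReal.ofReal δ⁻¹ * (∫⁻ z, ENNReal.ofReal (exp (δ * f z) - 1) ∂μ +
        ∫⁻ z, ENNReal.ofReal (ell (g z)) ∂μ) := by
  have hpt : ∀ z, ENNReal.ofReal (f z * (g z + 1)) ≤ ENNReal.ofReal (f z) +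
      ENNReal.ofReal δ⁻¹ * (ENNReal.ofReal (exp (δ * f z) - 1) + ENNReal.ofReal (ell (g z))) := by
    intro z
    have hyoung : f z * g z ≤ δ⁻¹ * (exp (δ * f z) - 1 + ell (g z)) := by
      rw [le_inv_mul_iff₀ hδ, ← mul_assoc]
      exact mul_le_exp_sub_one_add_ell _ (hg₀ z)
    calc ENNReal.ofReal (f z * (g z + 1))
        ≤ ENNReal.ofReal (f z + δ⁻¹ * (exp (δ * f z) - 1 + ell (g z))) :=
          ENNReal.ofReal_le_ofReal (by linarith)
      _ ≤ _ := by
        refine ENNReal.ofReal_add_le.trans (add_le_add_right ?_ _)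
        rw [ENNReal.ofReal_mul (inv_nonneg.2 hδ.le)]
        exact mul_le_mul_right ENNReal.ofReal_add_le _
  have hexp_meas : Measurable fun z => ENNReal.ofReal (exp (δ * f z) - 1) := by fun_prop
  refine (lintegral_mono hpt).trans_eq ?_
  rw [lintegral_add_left hf.ennreal_ofReal, lintegral_const_mul' _ _ ENNReal.ofReal_ne_top,
    lintegral_add_left hexp_meas]

end

theorem sup_integral_sq_mul_control_add_one_lt_top_general
    {Z : Type*} [MeasurableSpace Z] (μ : Measure Z)
    (h : Z → ℝ) (hmeas : Measurable h)
    (hL2 : ∫⁻ z, ENNReal.ofReal (h z ^ 2) ∂μ < ⊤)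
    (hexp : ∃ δ₁ : ℝ, 0 < δ₁ ∧ ∀ E : Set Z, MeasurableSet E → μ E < ⊤ →
      ∫⁻ z in E, ENNReal.ofReal (Real.exp (δ₁ * h z ^ 2)) ∂μ < ⊤)
    (M : ℕ) :
    ∃ C : ℝ≥0∞, C < ⊤ ∧ ∀ g : Z → ℝ, Measurable g → (∀ z, 0 ≤ g z) →
      (∫⁻ z, ENNReal.ofReal (ell (g z)) ∂μ ≤ (M : ℝ≥0∞)) →
      ∫⁻ z, ENNReal.ofReal (h z ^ 2 * (g z + 1)) ∂μ ≤ C := by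
  obtain ⟨δ, hδ, hexpE⟩ := hexp
  have hf : Measurable fun z => h z ^ 2 := hmeas.pow_const 2
  have hK := lintegral_exp_mul_sub_one_lt_top hf (fun z => sq_nonneg (h z)) hL2 hexpE
  refine ⟨∫⁻ z, ENNReal.ofReal (h z ^ 2) ∂μ +
    ENNReal.ofReal δ⁻¹ * (∫⁻ z, ENNReal.ofReal (exp (δ * h z ^ 2) - 1) ∂μ + M), ?_, ?_⟩
  · exact ENNReal.add_lt_top.2 ⟨hL2, ENNReal.mul_lt_top ENNReal.ofReal_lt_top
      (ENNReal.add_lt_top.2 ⟨hK, ENNReal.natCast_lt_top M⟩)⟩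
  · intro g _ hg₀ hgM
    exact (lintegral_mul_add_one_le hf hg₀ hδ).trans (by gcongr)

/-- Let `(Z, μ)` be σ-finite, `h : Z → [0,∞)` measurable with
`∫ h² dμ < ∞`, and suppose there is `δ₁ ∈ (0,∞)` such that `∫_E e^{δ₁ h²} dμ < ∞`
for every measurable `E` of finite measure.  Then for every `M ∈ ℕ`,
`sup_{g ∈ S^M} ∫ h²·(g+1) dμ < ∞`, where `S^M` is the set of measurable
`g : Z → [0,∞)` with `∫ l(g) dμ ≤ M`. -/
theorem sup_integral_sq_mul_control_add_one_lt_top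
    {Z : Type*} [MeasurableSpace Z] (μ : Measure Z) [SigmaFinite μ]
    (h : Z → ℝ) (hmeas : Measurable h) (hnonneg : ∀ z, 0 ≤ h z)
    (hL2 : ∫⁻ z, ENNReal.ofReal (h z ^ 2) ∂μ < ⊤)
    (hexp : ∃ δ₁ : ℝ, 0 < δ₁ ∧ ∀ E : Set Z, MeasurableSet E → μ E < ⊤ →
      ∫⁻ z in E, ENNReal.ofReal (Real.exp (δ₁ * h z ^ 2)) ∂μ < ⊤)
    (M : ℕ) :
    ∃ C : ℝ≥0∞, C < ⊤ ∧ ∀ g : Z → ℝ, Measurable g → (∀ z, 0 ≤ g z) →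
      (∫⁻ z, ENNReal.ofReal (ell (g z)) ∂μ ≤ (M : ℝ≥0∞)) →
      ∫⁻ z, ENNReal.ofReal (h z ^ 2 * (g z + 1)) ∂μ ≤ C :=
  sup_integral_sq_mul_control_add_one_lt_top_general μ h hmeas hL2 hexp M
end

section
/- Let (Z, 𝒵, μ) be a σ-finite measure space, let h : Z → [0,∞) be measurable with ∫_Z h² dμ < ∞, and suppose there exists δ₁ ∈ (0,∞) such that ∫_E e^{δ₁·h(z)²} μ(dz) < ∞ for every measurable set E with μ(E) < ∞. Then for every M ∈ ℕ, sup_{g ∈ S^M} ∫_Z h(z)·|g(z) − 1| μ(dz) < ∞. -/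
open MeasureTheory
open scoped ENNReal

/-! The Legendre transform of `ell` is `y ↦ eʸ - 1`, so the Fenchel–Young inequality gives
`h·|g - 1| ≤ ell g + (e^{|h|} - 1 - |h|)` pointwise, and integrating reduces the claim to
`∫ (e^{|h|} - 1 - |h|) dμ < ∞`. Where `|h| ≤ 1` the integrand is at most `h²`; the set where
`|h| > 1` has finite measure by Chebyshev, and there `e^{|h|} ≤ e^{1/(4δ₁)} e^{δ₁ h²}`. -/

theorem mul_le_ell_add_exp_sub_one (y : ℝ) {r : ℝ} (hr : 0 ≤ r) :
    y * r ≤ ell r + (Real.exp y - 1) := by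
  rcases hr.eq_or_lt with rfl | hr
  · simp [ell, (Real.exp_pos y).le]
  · -- `eʸ = r·e^{y - log r}` and `e^u ≥ 1 + u` with `u = y - log r`
    have hexp : Real.exp y = r * Real.exp (y - Real.log r) := by
      rw [Real.exp_sub, Real.exp_log hr]; field_simp
    have := mul_le_mul_of_nonneg_left (Real.add_one_le_exp (y - Real.log r)) hr.le
    rw [ell]; nlinarith

theorem mul_abs_sub_one_le_ell_add (x : ℝ) {r : ℝ} (hr : 0 ≤ r) :
    x * |r - 1| ≤ ell r + (Real.exp |x| - 1 - |x|) := by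
  calc x * |r - 1| ≤ |x| * |r - 1| := by gcongr; exact le_abs_self x
    _ ≤ _ := by
      rcases le_total 1 r with h1 | h1
      · rw [abs_of_nonneg (sub_nonneg.mpr h1)]
        linarith [mul_le_ell_add_exp_sub_one |x| hr]
      · -- `2|x| ≤ e^{|x|} - e^{-|x|}` lets `y = -|x|` in Fenchel–Young cover `r ≤ 1`
        have hsinh := Real.self_le_sinh_iff.mpr (abs_nonneg x)
        rw [Real.sinh_eq] at hsinh
        rw [abs_of_nonpos (sub_nonpos.mpr h1)]
        linarith [mul_le_ell_add_exp_sub_one (-|x|) hr]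

theorem abs_le_mul_sq_add {δ : ℝ} (hδ : 0 < δ) (x : ℝ) : |x| ≤ (4 * δ)⁻¹ + δ * x ^ 2 := by
  have h : 0 ≤ (2 * δ * |x| - 1) ^ 2 / (4 * δ) := by positivity
  rw [sub_sq, mul_pow, sq_abs] at h
  field_simp at h ⊢
  nlinarith

theorem exp_abs_sub_one_sub_abs_nonneg (x : ℝ) : 0 ≤ Real.exp |x| - 1 - |x| := by
  linarith [Real.add_one_le_exp |x|]

section Integrals

variable {Z : Type*} [MeasurableSpace Z] (μ : Measure Z)

theorem lintegral_mul_abs_sub_one_le {h g : Z → ℝ} (hh : Measurable h) (hg : ∀ z, 0 ≤ g z) :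
    ∫⁻ z, ENNReal.ofReal (h z * |g z - 1|) ∂μ ≤
      ∫⁻ z, ENNReal.ofReal (ell (g z)) ∂μ +
        ∫⁻ z, ENNReal.ofReal (Real.exp |h z| - 1 - |h z|) ∂μ := by
  have hmeas : Measurable fun z => ENNReal.ofReal (Real.exp |h z| - 1 - |h z|) := by
    fun_prop
  rw [← lintegral_add_right _ hmeas]
  exact lintegral_mono fun z =>
    (ENNReal.ofReal_le_ofReal (mul_abs_sub_one_le_ell_add (h z) (hg z))).trans
      ENNReal.ofReal_add_le

theorem measure_one_lt_abs_lt_top {h : Z → ℝ} (hh : Measurable h)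
    (hL2 : ∫⁻ z, ENNReal.ofReal (h z ^ 2) ∂μ < ⊤) : μ {z | 1 < |h z|} < ⊤ := by
  have hsub : {z | 1 < |h z|} ⊆ {z | 1 ≤ ENNReal.ofReal (h z ^ 2)} := fun z hz => by
    rw [Set.mem_ofPred_eq, ← sq_abs]
    exact ENNReal.one_le_ofReal.mpr (one_le_pow₀ (le_of_lt hz))
  calc μ {z | 1 < |h z|} ≤ (∫⁻ z, ENNReal.ofReal (h z ^ 2) ∂μ) / 1 :=
        (measure_mono hsub).trans
          (meas_ge_le_lintegral_div (by fun_prop) one_ne_zero ENNReal.one_ne_top)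
    _ < ⊤ := by rwa [div_one]

theorem lintegral_exp_abs_sub_one_sub_abs_lt_top {h : Z → ℝ} (hh : Measurable h)
    (hL2 : ∫⁻ z, ENNReal.ofReal (h z ^ 2) ∂μ < ⊤) {δ : ℝ} (hδ : 0 < δ)
    (hexp : ∀ E : Set Z, MeasurableSet E → μ E < ⊤ →
      ∫⁻ z in E, ENNReal.ofReal (Real.exp (δ * h z ^ 2)) ∂μ < ⊤) :
    ∫⁻ z, ENNReal.ofReal (Real.exp |h z| - 1 - |h z|) ∂μ < ⊤ := by
  set S := {z | 1 < |h z|}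
  have hS : MeasurableSet S := measurableSet_lt measurable_const (by fun_prop)
  have hlarge : ∫⁻ z in S, ENNReal.ofReal (Real.exp |h z| - 1 - |h z|) ∂μ ≤
      ENNReal.ofReal (Real.exp (4 * δ)⁻¹) *
        ∫⁻ z in S, ENNReal.ofReal (Real.exp (δ * h z ^ 2)) ∂μ := by
    rw [← lintegral_const_mul' _ _ ENNReal.ofReal_ne_top]
    refine setLIntegral_mono (by fun_prop) fun z _ => ?_
    rw [← ENNReal.ofReal_mul (Real.exp_pos _).le, ← Real.exp_add]
    refine ENNReal.ofReal_le_ofReal ?_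
    have := Real.exp_le_exp.mpr (abs_le_mul_sq_add hδ (h z))
    linarith [abs_nonneg (h z)]
  have hsmall : ∫⁻ z in Sᶜ, ENNReal.ofReal (Real.exp |h z| - 1 - |h z|) ∂μ ≤
      ∫⁻ z, ENNReal.ofReal (h z ^ 2) ∂μ := by
    refine le_trans (setLIntegral_mono (by fun_prop) fun z hz => ?_)
      (setLIntegral_le_lintegral _ _)
    have hz : |(|h z|)| ≤ 1 := by simpa [S] using hz
    refine ENNReal.ofReal_le_ofReal ?_
    simpa [abs_of_nonneg (exp_abs_sub_one_sub_abs_nonneg (h z))] using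
      Real.abs_exp_sub_one_sub_id_le hz
  rw [← lintegral_add_compl _ hS]
  exact ENNReal.add_lt_top.mpr
    ⟨hlarge.trans_lt (ENNReal.mul_lt_top ENNReal.ofReal_lt_top
        (hexp S hS (measure_one_lt_abs_lt_top μ hh hL2))),
      hsmall.trans_lt hL2⟩

end Integrals

theorem sup_integral_mul_abs_control_sub_one_lt_top_general
    {Z : Type*} [MeasurableSpace Z] (μ : Measure Z)
    (h : Z → ℝ) (hmeas : Measurable h)
    (hL2 : ∫⁻ z, ENNReal.ofReal (h z ^ 2) ∂μ < ⊤)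
    (hexp : ∃ δ₁ : ℝ, 0 < δ₁ ∧ ∀ E : Set Z, MeasurableSet E → μ E < ⊤ →
      ∫⁻ z in E, ENNReal.ofReal (Real.exp (δ₁ * h z ^ 2)) ∂μ < ⊤)
    (M : ℕ) :
    ∃ C : ℝ≥0∞, C < ⊤ ∧ ∀ g : Z → ℝ, Measurable g → (∀ z, 0 ≤ g z) →
      (∫⁻ z, ENNReal.ofReal (ell (g z)) ∂μ ≤ (M : ℝ≥0∞)) →
      ∫⁻ z, ENNReal.ofReal (h z * |g z - 1|) ∂μ ≤ C := by
  obtain ⟨δ, hδ, hδexp⟩ := hexp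
  refine ⟨M + ∫⁻ z, ENNReal.ofReal (Real.exp |h z| - 1 - |h z|) ∂μ,
    ENNReal.add_lt_top.mpr ⟨ENNReal.natCast_lt_top M,
      lintegral_exp_abs_sub_one_sub_abs_lt_top μ hmeas hL2 hδ hδexp⟩, ?_⟩
  intro g _ hg hgM
  exact (lintegral_mul_abs_sub_one_le μ hmeas hg).trans (add_le_add_left hgM _)

/-- Let `(Z, μ)` be σ-finite, `h : Z → [0,∞)` measurable with
`∫ h² dμ < ∞`, and suppose there is `δ₁ ∈ (0,∞)` such that `∫_E e^{δ₁ h²} dμ < ∞`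
for every measurable `E` of finite measure.  Then for every `M ∈ ℕ`,
`sup_{g ∈ S^M} ∫ h·|g − 1| dμ < ∞`. -/
theorem sup_integral_mul_abs_control_sub_one_lt_top
    {Z : Type*} [MeasurableSpace Z] (μ : Measure Z) [SigmaFinite μ]
    (h : Z → ℝ) (hmeas : Measurable h) (hnonneg : ∀ z, 0 ≤ h z)
    (hL2 : ∫⁻ z, ENNReal.ofReal (h z ^ 2) ∂μ < ⊤)
    (hexp : ∃ δ₁ : ℝ, 0 < δ₁ ∧ ∀ E : Set Z, MeasurableSet E → μ E < ⊤ →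
      ∫⁻ z in E, ENNReal.ofReal (Real.exp (δ₁ * h z ^ 2)) ∂μ < ⊤)
    (M : ℕ) :
    ∃ C : ℝ≥0∞, C < ⊤ ∧ ∀ g : Z → ℝ, Measurable g → (∀ z, 0 ≤ g z) →
      (∫⁻ z, ENNReal.ofReal (ell (g z)) ∂μ ≤ (M : ℝ≥0∞)) →
      ∫⁻ z, ENNReal.ofReal (h z * |g z - 1|) ∂μ ≤ C :=
  sup_integral_mul_abs_control_sub_one_lt_top_general μ h hmeas hL2 hexp M
end

section
/- Let T > 0, d ∈ ℕ, and let (X, 𝒳, ν) be a σ-finite measure space. Let a : [0,T] × ℝ^d → ℝ^d and g : [0,T] × ℝ^d × X → ℝ^d be measurable, and suppose there exists κ ∈ (0,∞) with 2⟨a(s,y), y⟩ ≤ κ·(1 + ‖y‖²) for all (s,y) ∈ [0,T] × ℝ^d. Let ψ : [0,T] × X → [0,∞) be measurable and set f(s) = ∫_X ‖g(s,v)‖₀·|ψ(s,v) − 1| ν(dv), where ‖g(s,v)‖₀ = sup_{y ∈ ℝ^d} ‖g(s,y,v)‖ / (1 + ‖y‖); suppose ∫_0^T f(s) ds < ∞.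 If x : [0,T] → ℝ^d is continuous and satisfies x(t) = x₀ + ∫_0^t a(s, x(s)) ds + ∫_0^t ∫_X g(s, x(s), v)·(ψ(s,v) − 1) ν(dv) ds for all t ∈ [0,T], then sup_{t ∈ [0,T]} ‖x(t)‖² ≤ (‖x₀‖² + κT + 2∫_0^T f(s) ds)·exp(κT + 4∫_0^T f(s) ds). -/
/-!
Write `u = ‖x‖²` and `c(s) = ∫ (ψ(s,v) - 1) g(s,x(s),v) ν(dv)`. Where the drift is integrable,
`u` is absolutely continuous with `u' = 2⟪a(s,x) + c, x⟫`. Coercivity bounds `2⟪a(s,x), x⟫` by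
`κ(1 + u)`, and the definition of `‖g‖₀` gives `‖c(s)‖ ≤ f(s)(1 + ‖x(s)‖)`, whence
`2⟪c, x⟫ ≤ 2f + 4fu`. Integrating, `u(t) ≤ ‖x₀‖² + κT + 2∫f + ∫₀ᵗ (κ + 4f) u`, and Grönwall's
inequality gives the bound.

The drift is not assumed integrable, so the energy estimate is propagated by continuous induction,
restarting the equation at the time beyond which the drift stops being integrable.
-/

open MeasureTheory Set
open scoped ENNReal RealInnerProductSpace

/-- `‖g(s,v)‖₀ = sup_{y} ‖g(s,y,v)‖ / (1 + ‖y‖)`, as an extended nonnegative real. -/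
noncomputable def gNorm0 {X : Type*} (d : ℕ)
    (g : ℝ × EuclideanSpace ℝ (Fin d) × X → EuclideanSpace ℝ (Fin d))
    (s : ℝ) (v : X) : ℝ≥0∞ :=
  ⨆ y : EuclideanSpace ℝ (Fin d), ENNReal.ofReal (‖g (s, y, v)‖ / (1 + ‖y‖))

open Filter

theorem AbsolutelyContinuousOnInterval.of_dist_le_mul {X Y : Type*} [PseudoMetricSpace X]
    [PseudoMetricSpace Y] {f : ℝ → X} {g : ℝ → Y} {a b C : ℝ}
    (hg : AbsolutelyContinuousOnInterval g a b)
    (hfg : ∀ s ∈ uIcc a b, ∀ t ∈ uIcc a b, dist (f s) (f t) ≤ C * dist (g s) (g t)) :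
    AbsolutelyContinuousOnInterval f a b := by
  unfold AbsolutelyContinuousOnInterval at hg ⊢
  refine squeeze_zero' (Eventually.of_forall fun _ => Finset.sum_nonneg fun _ _ => dist_nonneg)
    ?_ (by simpa using hg.const_mul C)
  rw [eventually_inf_principal]
  filter_upwards with E hE
  rw [Finset.mul_sum]
  exact Finset.sum_le_sum fun i hi => hfg _ (hE.1 i hi).1 _ (hE.1 i hi).2

theorem Real.dist_exp_neg_le {p q : ℝ} (hp : 0 ≤ p) (hq : 0 ≤ q) :
    dist (Real.exp (-p)) (Real.exp (-q)) ≤ dist p q := by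
  wlog hpq : p ≤ q generalizing p q
  · rw [dist_comm, dist_comm p]; exact this hq hp (le_of_not_ge hpq)
  have hsplit : Real.exp (-q) = Real.exp (-p) * Real.exp (-(q - p)) := by
    rw [← Real.exp_add]; ring_nf
  have hlow := Real.add_one_le_exp (-(q - p))
  have hup : Real.exp (-(q - p)) ≤ 1 := Real.exp_le_one_iff.2 (by linarith)
  have hp1 : Real.exp (-p) ≤ 1 := Real.exp_le_one_iff.2 (by linarith)
  have hp0 := Real.exp_pos (-p)
  rw [Real.dist_eq, Real.dist_eq, hsplit, abs_of_nonneg (by nlinarith),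
    abs_of_nonpos (by linarith)]
  nlinarith

theorem IntervalIntegrable.absolutelyContinuousOnInterval_exp_neg_intervalIntegral
    {φ : ℝ → ℝ} {a b : ℝ} (hab : a ≤ b) (hφ : IntervalIntegrable φ volume a b)
    (hφ0 : ∀ s ∈ Icc a b, 0 ≤ φ s) :
    AbsolutelyContinuousOnInterval (fun t => Real.exp (-∫ s in a..t, φ s)) a b := by
  have hΦ0 : ∀ t ∈ uIcc a b, 0 ≤ ∫ s in a..t, φ s := fun t ht => by
    rw [uIcc_of_le hab] at ht
    exact intervalIntegral.integral_nonneg ht.1 fun s hs => hφ0 s ⟨hs.1, hs.2.trans ht.2⟩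
  exact (hφ.absolutelyContinuousOnInterval_intervalIntegral left_mem_uIcc).of_dist_le_mul
    (C := 1) fun s hs t ht => by rw [one_mul]; exact Real.dist_exp_neg_le (hΦ0 s hs) (hΦ0 t ht)

theorem MeasureTheory.IntegrableOn.intervalIntegrable_of_mem {E : Type*} [NormedAddCommGroup E]
    {G : ℝ → E} {a b p q : ℝ} (hG : IntegrableOn G (Icc a b)) (hp : p ∈ Icc a b)
    (hq : q ∈ Icc a b) : IntervalIntegrable G volume p q :=
  (hG.mono_set (uIcc_subset_Icc hp hq)).intervalIntegrable

theorem MeasureTheory.IntegrableOn.continuousOn_intervalIntegral {E : Type*}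
    [NormedAddCommGroup E] [NormedSpace ℝ E] {G : ℝ → E} {a b : ℝ} (hab : a ≤ b)
    (hG : IntegrableOn G (Icc a b)) : ContinuousOn (fun t => ∫ s in a..t, G s) (Icc a b) := by
  simpa [uIcc_of_le hab] using
    intervalIntegral.continuousOn_primitive_interval (a := a) (b := b) (by rwa [uIcc_of_le hab])

theorem integral_const_add_mul_le {φ : ℝ → ℝ} {a b t κ c : ℝ} (hκ : 0 ≤ κ) (hc : 0 ≤ c)
    (hφ : IntegrableOn φ (Icc a b)) (hφ0 : ∀ s ∈ Icc a b, 0 ≤ φ s) (ht : t ∈ Icc a b) :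
    ∫ s in a..t, (κ + c * φ s) ≤ κ * (b - a) + c * ∫ s in a..b, φ s := by
  have ha : a ∈ Icc a b := left_mem_Icc.2 (ht.1.trans ht.2)
  rw [intervalIntegral.integral_add intervalIntegrable_const
    ((hφ.intervalIntegrable_of_mem ha ht).const_mul c), intervalIntegral.integral_const,
    intervalIntegral.integral_const_mul, smul_eq_mul]
  have hmono : ∫ s in a..t, φ s ≤ ∫ s in a..b, φ s :=
    intervalIntegral.integral_mono_interval le_rfl ht.1 ht.2
      (ae_restrict_of_forall_mem measurableSet_Ioc fun s hs => hφ0 s (Ioc_subset_Icc_self hs))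
      (hφ.intervalIntegrable_of_mem ha (right_mem_Icc.2 (ht.1.trans ht.2)))
  nlinarith [mul_le_mul_of_nonneg_left hmono hc, mul_le_mul_of_nonneg_left ht.2 hκ]

theorem le_mul_exp_integral_of_le_add_integral_mul {u φ : ℝ → ℝ} {C a b : ℝ} (hab : a ≤ b)
    (hu : ContinuousOn u (Icc a b)) (hφ : IntegrableOn φ (Icc a b))
    (hφ0 : ∀ s ∈ Icc a b, 0 ≤ φ s) (H : ∀ t ∈ Icc a b, u t ≤ C + ∫ s in a..t, φ s * u s) :
    u b ≤ C * Real.exp (∫ s in a..b, φ s) := by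
  have hφi : IntervalIntegrable φ volume a b :=
    (intervalIntegrable_iff_integrableOn_Icc_of_le hab).2 hφ
  have hφu : IntervalIntegrable (fun s => φ s * u s) volume a b :=
    (intervalIntegrable_iff_integrableOn_Icc_of_le hab).2 (hφ.mul_continuousOn hu isCompact_Icc)
  set w : ℝ → ℝ := fun t => C + ∫ s in a..t, φ s * u s
  set Φ : ℝ → ℝ := fun t => ∫ s in a..t, φ s
  have hwac : AbsolutelyContinuousOnInterval w a b :=
    (hφu.absolutelyContinuousOnInterval_intervalIntegral left_mem_uIcc).of_dist_le_mul
      (C := 1) fun s _ t _ => by simp [w, dist_add_left]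
  have hEac : AbsolutelyContinuousOnInterval (fun t => Real.exp (-Φ t)) a b :=
    hφi.absolutelyContinuousOnInterval_exp_neg_intervalIntegral hab hφ0
  have hzac := hwac.fun_mul hEac
  -- `(w e^{-Φ})' = φ (u - w) e^{-Φ} ≤ 0` almost everywhere.
  have hderiv : ∀ᵐ t ∂volume.restrict (Icc a b),
      deriv (fun t => w t * Real.exp (-Φ t)) t ≤ (fun _ => (0 : ℝ)) t := by
    rw [ae_restrict_iff' measurableSet_Icc]
    filter_upwards [hφu.ae_hasDerivAt_integral, hφi.ae_hasDerivAt_integral] with t hwt hΦt htab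
    have htab' := Icc_subset_uIcc htab
    have hz : HasDerivAt (fun t => w t * Real.exp (-Φ t))
        (φ t * u t * Real.exp (-Φ t) + w t * (Real.exp (-Φ t) * -φ t)) t :=
      ((hwt htab' a left_mem_uIcc).const_add C).mul (hΦt htab' a left_mem_uIcc).neg.exp
    rw [hz.deriv]
    have hut : u t ≤ w t := H t htab
    have := mul_nonneg (mul_nonneg (hφ0 t htab) (Real.exp_pos (-Φ t)).le) (sub_nonneg.2 hut)
    linarith
  have hmono := intervalIntegral.integral_mono_ae_restrict hab hzac.intervalIntegrable_deriv
    intervalIntegrable_const hderiv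
  rw [hzac.integral_deriv_eq_sub, intervalIntegral.integral_const, smul_zero] at hmono
  have hza : w a * Real.exp (-Φ a) = C := by simp [w, Φ]
  calc u b ≤ w b := H b (right_mem_Icc.2 hab)
    _ = w b * Real.exp (-Φ b) * Real.exp (Φ b) := by
      rw [mul_assoc, ← Real.exp_add, neg_add_cancel, Real.exp_zero, mul_one]
    _ ≤ C * Real.exp (Φ b) := by gcongr; linarith

section Energy

variable {E : Type*} [NormedAddCommGroup E] [InnerProductSpace ℝ E]

theorem two_inner_le_of_norm_le_mul {F y : E} {φ : ℝ} (hφ : 0 ≤ φ) (hF : ‖F‖ ≤ φ * (1 + ‖y‖)) :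
    2 * ⟪F, y⟫ ≤ 2 * φ + 4 * φ * ‖y‖ ^ 2 := by
  have := real_inner_le_norm F y
  have := mul_le_mul_of_nonneg_right hF (norm_nonneg y)
  nlinarith [mul_nonneg hφ (sq_nonneg (‖y‖ - 1))]

theorem IntervalIntegrable.absolutelyContinuousOnInterval_norm_sq_add_intervalIntegral
    {F : ℝ → E} {a b : ℝ} (hF : IntervalIntegrable F volume a b) (y : E) :
    AbsolutelyContinuousOnInterval (fun t => ‖y + ∫ s in a..t, F s‖ ^ 2) a b := by
  set X : ℝ → E := fun t => y + ∫ s in a..t, F s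
  set N : ℝ → ℝ := fun t => ∫ s in a..t, ‖F s‖
  have hFi : ∀ t ∈ uIcc a b, IntervalIntegrable F volume a t := fun t ht =>
    hF.mono_set (uIcc_subset_uIcc left_mem_uIcc ht)
  obtain ⟨M, hM⟩ := isCompact_uIcc.exists_bound_of_continuousOn
    (continuousOn_const.add (intervalIntegral.continuousOn_primitive_interval' hF left_mem_uIcc))
  refine (hF.norm.absolutelyContinuousOnInterval_intervalIntegral left_mem_uIcc).of_dist_le_mul
    (C := 2 * M) fun s hs t ht => ?_
  have hXst : X s - X t = ∫ r in t..s, F r := by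
    simp only [X, add_sub_add_left_eq_sub]
    exact intervalIntegral.integral_interval_sub_left (hFi s hs) (hFi t ht)
  have hNst : N s - N t = ∫ r in t..s, ‖F r‖ :=
    intervalIntegral.integral_interval_sub_left (hFi s hs).norm (hFi t ht).norm
  have hXs : ‖X s‖ ≤ M := hM s hs
  have hXt : ‖X t‖ ≤ M := hM t ht
  calc dist (‖X s‖ ^ 2) (‖X t‖ ^ 2) = |‖X s‖ - ‖X t‖| * (‖X s‖ + ‖X t‖) := by
        rw [Real.dist_eq, ← abs_of_nonneg (by positivity : 0 ≤ ‖X s‖ + ‖X t‖), ← abs_mul]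
        ring_nf
    _ ≤ ‖X s - X t‖ * (2 * M) := by
        gcongr
        · exact abs_norm_sub_norm_le _ _
        · linarith
    _ ≤ |N s - N t| * (2 * M) := by
        gcongr
        · linarith [(norm_nonneg (X s)).trans hXs]
        · rw [hXst, hNst]; exact intervalIntegral.norm_integral_le_abs_integral_norm
    _ = 2 * M * dist (N s) (N t) := by rw [Real.dist_eq]; ring

/-- Where `D` is not integrable on `[a, r]`, `∫ s in a..r, D s` takes the junk value `0`, so
beyond `y` the equation only involves `F`. -/
theorem eq_add_integral_of_forall_not_integrableOn {x D F : ℝ → E} {a b y : ℝ}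
    (hx : ContinuousOn x (Icc a b)) (hF : IntegrableOn F (Icc a b))
    (heq : ∀ t ∈ Icc a b, x t = x a + (∫ s in a..t, D s) + ∫ s in a..t, F s)
    (hy : y ∈ Ico a b) (hD : ∀ r ∈ Ioc y b, ¬IntegrableOn D (Icc a r)) :
    ∀ r ∈ Icc y b, x r = x y + ∫ s in y..r, F s := by
  have hab : a ≤ b := hy.1.trans hy.2.le
  have hyb : Icc y b ⊆ Icc a b := Icc_subset_Icc hy.1 le_rfl
  have hxF : EqOn x (fun r => x a + ∫ s in a..r, F s) (Icc y b) := by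
    refine EqOn.of_subset_closure (s := Ioc y b) (fun r hr => ?_) (hx.mono hyb)
      (continuousOn_const.add ((hF.continuousOn_intervalIntegral hab).mono hyb))
      Ioc_subset_Icc_self (by rw [closure_Ioc hy.2.ne])
    have hD0 : ∫ s in a..r, D s = 0 := intervalIntegral.integral_undef fun hi => hD r hr
      ((intervalIntegrable_iff_integrableOn_Icc_of_le (hy.1.trans hr.1.le)).1 hi)
    simpa [hD0] using heq r (hyb (Ioc_subset_Icc_self hr))
  intro r hr
  have hy' : y ∈ Icc y b := left_mem_Icc.2 hy.2.le
  rw [hxF hr, hxF hy', add_assoc, intervalIntegral.integral_add_adjacent_intervals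
    (hF.intervalIntegrable_of_mem (left_mem_Icc.2 hab) (hyb hy'))
    (hF.intervalIntegrable_of_mem (hyb hy') (hyb hr))]

variable [CompleteSpace E]

theorem norm_sq_le_add_integral_of_eq_add_integral {x F : ℝ → E} {h : ℝ → ℝ} {a b : ℝ}
    (hab : a ≤ b) (hF : IntegrableOn F (Icc a b)) (hh : IntegrableOn h (Icc a b))
    (hx : ∀ t ∈ Icc a b, x t = x a + ∫ s in a..t, F s)
    (hbd : ∀ s ∈ Icc a b, 2 * ⟪F s, x s⟫ ≤ h s) :
    ‖x b‖ ^ 2 ≤ ‖x a‖ ^ 2 + ∫ s in a..b, h s := by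
  have hFi : IntervalIntegrable F volume a b :=
    (intervalIntegrable_iff_integrableOn_Icc_of_le hab).2 hF
  have hac := hFi.absolutelyContinuousOnInterval_norm_sq_add_intervalIntegral (x a)
  have hderiv : ∀ᵐ t, t ∈ uIcc a b → HasDerivAt (fun t => ‖x a + ∫ s in a..t, F s‖ ^ 2)
      (2 * ⟪x a + ∫ s in a..t, F s, F t⟫) t := by
    filter_upwards [hFi.ae_hasDerivAt_integral] with t ht htab
    exact ((ht htab a left_mem_uIcc).const_add (x a)).norm_sq
  have hmono := intervalIntegral.integral_mono_ae_restrict hab hac.intervalIntegrable_deriv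
    ((intervalIntegrable_iff_integrableOn_Icc_of_le hab).2 hh) <| by
      rw [EventuallyLE, ae_restrict_iff' measurableSet_Icc]
      filter_upwards [hderiv] with t ht htab
      rw [(ht (Icc_subset_uIcc htab)).deriv, real_inner_comm, ← hx t htab]
      exact hbd t htab
  rw [hac.integral_deriv_eq_sub, ← hx b (right_mem_Icc.2 hab), intervalIntegral.integral_same,
    add_zero] at hmono
  linarith

theorem norm_sq_le_add_integral_of_eq_add_integral_add_integral {x D F : ℝ → E}
    {h : ℝ → ℝ} {a b : ℝ} (hx : ContinuousOn x (Icc a b)) (hF : IntegrableOn F (Icc a b))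
    (hh : IntegrableOn h (Icc a b))
    (heq : ∀ t ∈ Icc a b, x t = x a + (∫ s in a..t, D s) + ∫ s in a..t, F s)
    (hDF : ∀ s ∈ Icc a b, 2 * ⟪D s + F s, x s⟫ ≤ h s)
    (hFx : ∀ s ∈ Icc a b, 2 * ⟪F s, x s⟫ ≤ h s) :
    ∀ t ∈ Icc a b, ‖x t‖ ^ 2 ≤ ‖x a‖ ^ 2 + ∫ s in a..t, h s := by
  intro t ht
  have hab : a ≤ b := ht.1.trans ht.2
  set S := {t | ‖x t‖ ^ 2 ≤ ‖x a‖ ^ 2 + ∫ s in a..t, h s}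
  suffices Icc a b ⊆ S from this ht
  have hS : IsClosed (S ∩ Icc a b) := by
    rw [inter_comm]
    exact isClosed_Icc.isClosed_le (hx.norm.pow 2)
      (continuousOn_const.add (hh.continuousOn_intervalIntegral hab))
  refine hS.Icc_subset_of_forall_mem_nhdsWithin (by simp [S]) ?_
  rintro y ⟨hyS, hy⟩
  -- Either `D` is integrable a little beyond `y`, and the estimate holds there starting from
  -- `a`, or it is integrable on no `[a, r]` with `r > y`, and the equation restarts at `y` with
  -- `F` alone.
  by_cases hgood : ∃ r ∈ Ioc y b, IntegrableOn D (Icc a r)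
  · obtain ⟨r, hr, hDr⟩ := hgood
    filter_upwards [Ioc_mem_nhdsGT hr.1] with t ht
    have hsub : Icc a t ⊆ Icc a b := Icc_subset_Icc le_rfl (ht.2.trans hr.2)
    have hDt : IntegrableOn D (Icc a t) := hDr.mono_set (Icc_subset_Icc le_rfl ht.2)
    refine norm_sq_le_add_integral_of_eq_add_integral (F := fun s => D s + F s)
      (hy.1.trans ht.1.le) (hDt.add (hF.mono_set hsub)) (hh.mono_set hsub)
      (fun s hs => ?_) (fun s hs => hDF s (hsub hs))
    have hat : a ∈ Icc a t := left_mem_Icc.2 (hy.1.trans ht.1.le)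
    rw [intervalIntegral.integral_add (hDt.intervalIntegrable_of_mem hat hs)
      ((hF.mono_set hsub).intervalIntegrable_of_mem hat hs), ← add_assoc, ← heq s (hsub hs)]
  · push Not at hgood
    have hxy := eq_add_integral_of_forall_not_integrableOn hx hF heq hy hgood
    filter_upwards [Ioc_mem_nhdsGT hy.2] with t ht
    have hsub : Icc y t ⊆ Icc a b := Icc_subset_Icc hy.1 ht.2
    have hyt := norm_sq_le_add_integral_of_eq_add_integral ht.1.le (hF.mono_set hsub)
      (hh.mono_set hsub) (fun r hr => hxy r ⟨hr.1, hr.2.trans ht.2⟩)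
      (fun s hs => hFx s (hsub hs))
    have hyab : y ∈ Icc a b := Ico_subset_Icc_self hy
    have := intervalIntegral.integral_add_adjacent_intervals
      (hh.intervalIntegrable_of_mem (left_mem_Icc.2 hab) hyab)
      (hh.intervalIntegrable_of_mem hyab (hsub (right_mem_Icc.2 ht.1.le)))
    change ‖x t‖ ^ 2 ≤ ‖x a‖ ^ 2 + ∫ s in a..t, h s
    change ‖x y‖ ^ 2 ≤ ‖x a‖ ^ 2 + ∫ s in a..y, h s at hyS
    linarith

theorem norm_sq_le_add_integral_mul_of_eq_add_integral_add_integral {x D F : ℝ → E}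
    {φ : ℝ → ℝ} {a b κ : ℝ} (hκ : 0 ≤ κ) (hx : ContinuousOn x (Icc a b))
    (hFm : AEStronglyMeasurable F (volume.restrict (Icc a b))) (hφ : IntegrableOn φ (Icc a b))
    (hφ0 : ∀ s ∈ Icc a b, 0 ≤ φ s)
    (heq : ∀ t ∈ Icc a b, x t = x a + (∫ s in a..t, D s) + ∫ s in a..t, F s)
    (hD : ∀ s ∈ Icc a b, 2 * ⟪D s, x s⟫ ≤ κ * (1 + ‖x s‖ ^ 2))
    (hF : ∀ s ∈ Icc a b, ‖F s‖ ≤ φ s * (1 + ‖x s‖)) :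
    ∀ t ∈ Icc a b, ‖x t‖ ^ 2 ≤ (‖x a‖ ^ 2 + κ * (b - a) + 2 * ∫ s in a..b, φ s) +
      ∫ s in a..t, (κ + 4 * φ s) * ‖x s‖ ^ 2 := by
  intro t ht
  have hab : a ≤ b := ht.1.trans ht.2
  have ha : a ∈ Icc a b := left_mem_Icc.2 hab
  have hρu : IntegrableOn (fun s => (κ + 4 * φ s) * ‖x s‖ ^ 2) (Icc a b) :=
    (continuous_const.integrableOn_Icc.add (hφ.const_mul 4)).mul_continuousOn (hx.norm.pow 2)
      isCompact_Icc
  have hFi : IntegrableOn F (Icc a b) :=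
    Integrable.mono' (hφ.mul_continuousOn (continuousOn_const.add hx.norm) isCompact_Icc) hFm
      (ae_restrict_of_forall_mem measurableSet_Icc hF)
  have hFx : ∀ s ∈ Icc a b, 2 * ⟪F s, x s⟫ ≤ 2 * φ s + 4 * φ s * ‖x s‖ ^ 2 := fun s hs =>
    two_inner_le_of_norm_le_mul (hφ0 s hs) (hF s hs)
  have henergy := norm_sq_le_add_integral_of_eq_add_integral_add_integral
    (h := fun s => (κ + 2 * φ s) + (κ + 4 * φ s) * ‖x s‖ ^ 2) hx hFi
    ((continuous_const.integrableOn_Icc.add (hφ.const_mul 2)).add hρu) heq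
    (fun s hs => by
      rw [inner_add_left]
      linarith [hD s hs, hFx s hs])
    (fun s hs => by
      nlinarith [hFx s hs, mul_nonneg hκ (add_nonneg zero_le_one (sq_nonneg ‖x s‖))]) t ht
  rw [intervalIntegral.integral_add
    (intervalIntegrable_const.add ((hφ.intervalIntegrable_of_mem ha ht).const_mul 2))
    (hρu.intervalIntegrable_of_mem ha ht)] at henergy
  linarith [integral_const_add_mul_le hκ zero_le_two hφ hφ0 ht]

theorem norm_sq_le_mul_exp_of_eq_add_integral_add_integral {x D F : ℝ → E} {φ : ℝ → ℝ}
    {a b κ : ℝ} (hκ : 0 ≤ κ) (hx : ContinuousOn x (Icc a b))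
    (hFm : AEStronglyMeasurable F (volume.restrict (Icc a b))) (hφ : IntegrableOn φ (Icc a b))
    (hφ0 : ∀ s ∈ Icc a b, 0 ≤ φ s)
    (heq : ∀ t ∈ Icc a b, x t = x a + (∫ s in a..t, D s) + ∫ s in a..t, F s)
    (hD : ∀ s ∈ Icc a b, 2 * ⟪D s, x s⟫ ≤ κ * (1 + ‖x s‖ ^ 2))
    (hF : ∀ s ∈ Icc a b, ‖F s‖ ≤ φ s * (1 + ‖x s‖)) :
    ∀ t ∈ Icc a b, ‖x t‖ ^ 2 ≤
      (‖x a‖ ^ 2 + κ * (b - a) + 2 * ∫ s in a..b, φ s) *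
        Real.exp (κ * (b - a) + 4 * ∫ s in a..b, φ s) := by
  intro t ht
  have hab : a ≤ b := ht.1.trans ht.2
  have hC : 0 ≤ ‖x a‖ ^ 2 + κ * (b - a) + 2 * ∫ s in a..b, φ s := by
    have := intervalIntegral.integral_nonneg (μ := volume) hab hφ0
    have := mul_nonneg hκ (sub_nonneg.2 hab)
    positivity
  have hsub : Icc a t ⊆ Icc a b := Icc_subset_Icc le_rfl ht.2
  have hρ : IntegrableOn (fun s => κ + 4 * φ s) (Icc a b) :=
    continuous_const.integrableOn_Icc.add (hφ.const_mul 4)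
  have hgron := le_mul_exp_integral_of_le_add_integral_mul ht.1 ((hx.norm.pow 2).mono hsub)
    (hρ.mono_set hsub)
    (fun s hs => by linarith [hφ0 s (hsub hs)]) fun r hr =>
      norm_sq_le_add_integral_mul_of_eq_add_integral_add_integral hκ hx hFm hφ hφ0 heq hD hF r
        (hsub hr)
  exact hgron.trans (mul_le_mul_of_nonneg_left
    (Real.exp_le_exp.2 (integral_const_add_mul_le hκ zero_le_four hφ hφ0 ht)) hC)

end Energy

section gNorm0

variable {X : Type*} {d : ℕ} {g : ℝ × EuclideanSpace ℝ (Fin d) × X → EuclideanSpace ℝ (Fin d)}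

theorem enorm_le_gNorm0_mul (s : ℝ) (y : EuclideanSpace ℝ (Fin d)) (v : X) :
    ‖g (s, y, v)‖ₑ ≤ gNorm0 d g s v * ENNReal.ofReal (1 + ‖y‖) := by
  have hy : 0 < 1 + ‖y‖ := by positivity
  calc ‖g (s, y, v)‖ₑ
      = ENNReal.ofReal (‖g (s, y, v)‖ / (1 + ‖y‖)) * ENNReal.ofReal (1 + ‖y‖) := by
        rw [← ENNReal.ofReal_mul (by positivity), div_mul_cancel₀ _ hy.ne', ofReal_norm]
    _ ≤ gNorm0 d g s v * ENNReal.ofReal (1 + ‖y‖) := by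
        gcongr
        exact le_iSup (fun y' => ENNReal.ofReal (‖g (s, y', v)‖ / (1 + ‖y'‖))) y

variable [MeasurableSpace X] (ν : Measure X) (ψ : ℝ × X → ℝ)

theorem enorm_integral_smul_le_lintegral_gNorm0_mul (s : ℝ) (y : EuclideanSpace ℝ (Fin d)) :
    ‖∫ v, (ψ (s, v) - 1) • g (s, y, v) ∂ν‖ₑ ≤
      (∫⁻ v, gNorm0 d g s v * ENNReal.ofReal |ψ (s, v) - 1| ∂ν) * ENNReal.ofReal (1 + ‖y‖) := by
  rw [← lintegral_mul_const' _ _ ENNReal.ofReal_ne_top]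
  refine (enorm_integral_le_lintegral_enorm _).trans (lintegral_mono fun v => ?_)
  rw [enorm_smul, Real.enorm_eq_ofReal_abs, mul_comm (gNorm0 d g s v), mul_assoc]
  gcongr
  exact enorm_le_gNorm0_mul s y v

theorem stronglyMeasurable_integral_smul [SFinite ν] (hg : Measurable g) (hψ : Measurable ψ)
    {y : ℝ → EuclideanSpace ℝ (Fin d)} (hy : Measurable y) :
    StronglyMeasurable fun s => ∫ v, (ψ (s, v) - 1) • g (s, y s, v) ∂ν :=
  StronglyMeasurable.integral_prod_right'
    (f := fun p : ℝ × X => (ψ p - 1) • g (p.1, y p.1, p.2)) (by fun_prop)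

/-- `s ↦ ∫⁻ v, gNorm0 d g s v * …` need not be measurable, so the integrable rate `φ` is read off
the control term itself. -/
theorem exists_integrableOn_norm_integral_smul_eq_mul [SFinite ν] (hg : Measurable g)
    (hψ : Measurable ψ) {y : ℝ → EuclideanSpace ℝ (Fin d)} (hy : Continuous y) {S : Set ℝ}
    (hf : ∫⁻ s in S, ∫⁻ v, gNorm0 d g s v * ENNReal.ofReal |ψ (s, v) - 1| ∂ν < ⊤) :
    ∃ φ : ℝ → ℝ, (∀ s, 0 ≤ φ s) ∧ IntegrableOn φ S ∧
      ∫ s in S, φ s ≤ (∫⁻ s in S, ∫⁻ v, gNorm0 d g s v * ENNReal.ofReal |ψ (s, v) - 1| ∂ν).toReal ∧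
      ∀ s, ‖∫ v, (ψ (s, v) - 1) • g (s, y s, v) ∂ν‖ = φ s * (1 + ‖y s‖) := by
  set c : ℝ → EuclideanSpace ℝ (Fin d) := fun s => ∫ v, (ψ (s, v) - 1) • g (s, y s, v) ∂ν
  have hc : StronglyMeasurable c := stronglyMeasurable_integral_smul ν ψ hg hψ hy.measurable
  have hpos : ∀ s, 0 < 1 + ‖y s‖ := fun s => by positivity
  have hle : ∀ s, ENNReal.ofReal (‖c s‖ / (1 + ‖y s‖)) ≤
      ∫⁻ v, gNorm0 d g s v * ENNReal.ofReal |ψ (s, v) - 1| ∂ν := fun s => by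
    rw [ENNReal.ofReal_div_of_pos (hpos s), ofReal_norm]
    exact ENNReal.div_le_of_le_mul (enorm_integral_smul_le_lintegral_gNorm0_mul ν ψ s (y s))
  have hφm : AEStronglyMeasurable (fun s => ‖c s‖ / (1 + ‖y s‖)) (volume.restrict S) :=
    (hc.norm.measurable.div (by fun_prop)).aestronglyMeasurable
  have hφ0 : ∀ s, 0 ≤ ‖c s‖ / (1 + ‖y s‖) := fun s => by positivity
  refine ⟨fun s => ‖c s‖ / (1 + ‖y s‖), hφ0, ⟨hφm, ?_⟩, ?_, fun s => ?_⟩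
  · exact (hasFiniteIntegral_iff_ofReal (ae_of_all _ hφ0)).2 ((lintegral_mono hle).trans_lt hf)
  · rw [integral_eq_lintegral_of_nonneg_ae (ae_of_all _ hφ0) hφm]
    exact ENNReal.toReal_mono hf.ne (lintegral_mono hle)
  · exact (div_mul_cancel₀ _ (hpos s).ne').symm

end gNorm0

theorem apriori_bound_controlled_equation_general
    (T : ℝ) (hT : 0 < T) (d : ℕ)
    {X : Type*} [MeasurableSpace X] (ν : Measure X) [SigmaFinite ν]
    (a : ℝ × EuclideanSpace ℝ (Fin d) → EuclideanSpace ℝ (Fin d))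
    (g : ℝ × EuclideanSpace ℝ (Fin d) × X → EuclideanSpace ℝ (Fin d))
    (hgmeas : Measurable g)
    (κ : ℝ) (hκ : 0 < κ)
    (hcoer : ∀ s ∈ Icc (0:ℝ) T, ∀ y : EuclideanSpace ℝ (Fin d),
      2 * ⟪a (s, y), y⟫ ≤ κ * (1 + ‖y‖ ^ 2))
    (ψ : ℝ × X → ℝ) (hψmeas : Measurable ψ)
    (hf : ∫⁻ s in Icc (0:ℝ) T,
        ∫⁻ v, gNorm0 d g s v * ENNReal.ofReal |ψ (s, v) - 1| ∂ν < ⊤)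
    (x₀ : EuclideanSpace ℝ (Fin d)) (x : ℝ → EuclideanSpace ℝ (Fin d))
    (hxcont : ContinuousOn x (Icc 0 T))
    (hxeq : ∀ t ∈ Icc (0:ℝ) T,
      x t = x₀ + (∫ s in (0:ℝ)..t, a (s, x s))
          + ∫ s in (0:ℝ)..t, ∫ v, (ψ (s, v) - 1) • g (s, x s, v) ∂ν) :
    ∀ t ∈ Icc (0:ℝ) T,
      ‖x t‖ ^ 2 ≤
        (‖x₀‖ ^ 2 + κ * T +
            2 * (∫⁻ s in Icc (0:ℝ) T,
                ∫⁻ v, gNorm0 d g s v * ENNReal.ofReal |ψ (s, v) - 1| ∂ν).toReal) *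
          Real.exp (κ * T +
            4 * (∫⁻ s in Icc (0:ℝ) T,
                ∫⁻ v, gNorm0 d g s v * ENNReal.ofReal |ψ (s, v) - 1| ∂ν).toReal) := by
  intro t ht
  set x' : ℝ → EuclideanSpace ℝ (Fin d) := fun s => x (projIcc 0 T hT.le s)
  have hx' : Continuous x' :=
    hxcont.comp_continuous (continuous_subtype_val.comp continuous_projIcc) fun s =>
      (projIcc 0 T hT.le s).2
  have hxx' : ∀ s ∈ Icc 0 T, x' s = x s := fun s hs => by simp [x', projIcc_of_mem _ hs]
  have hF : ∀ s ∈ Icc 0 T, ∫ v, (ψ (s, v) - 1) • g (s, x s, v) ∂ν =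
      ∫ v, (ψ (s, v) - 1) • g (s, x' s, v) ∂ν := fun s hs => by rw [hxx' s hs]
  have hFm := ((stronglyMeasurable_integral_smul ν ψ hgmeas hψmeas hx'.measurable
    ).aestronglyMeasurable (μ := volume.restrict (Icc 0 T))).congr
    ((ae_restrict_mem measurableSet_Icc).mono fun s hs => (hF s hs).symm)
  obtain ⟨φ, hφ0, hφ, hφI, hφF⟩ :=
    exists_integrableOn_norm_integral_smul_eq_mul ν ψ hgmeas hψmeas hx' hf
  have hx0 : x 0 = x₀ := by simpa using hxeq 0 (left_mem_Icc.2 hT.le)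
  have key := norm_sq_le_mul_exp_of_eq_add_integral_add_integral hκ.le hxcont hFm hφ
    (fun s _ => hφ0 s) (by simpa [hx0] using hxeq) (fun s hs => hcoer s hs (x s))
    (fun s hs => by rw [hF s hs, hφF s, hxx' s hs]) t ht
  have hJ : ∫ s in (0:ℝ)..T, φ s = ∫ s in Icc 0 T, φ s := by
    rw [intervalIntegral.integral_of_le hT.le, integral_Icc_eq_integral_Ioc]
  rw [hx0, sub_zero, hJ] at key
  refine key.trans ?_
  have : 0 ≤ ∫ s in Icc (0:ℝ) T, φ s := setIntegral_nonneg measurableSet_Icc fun s _ => hφ0 s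
  gcongr

/-- A priori bound for solutions of the controlled equation:
if `2⟨a(s,y), y⟩ ≤ κ(1 + ‖y‖²)`, `f(s) = ∫_X ‖g(s,v)‖₀·|ψ(s,v) − 1| ν(dv)` has finite
integral `I = ∫₀ᵀ f(s) ds`, and `x` is a continuous solution of
`x(t) = x₀ + ∫₀ᵗ a(s,x(s)) ds + ∫₀ᵗ ∫_X g(s,x(s),v)(ψ(s,v) − 1) ν(dv) ds`, then
`sup_{t ∈ [0,T]} ‖x(t)‖² ≤ (‖x₀‖² + κT + 2I)·exp(κT + 4I)`. -/
theorem apriori_bound_controlled_equation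
    (T : ℝ) (hT : 0 < T) (d : ℕ)
    {X : Type*} [MeasurableSpace X] (ν : Measure X) [SigmaFinite ν]
    (a : ℝ × EuclideanSpace ℝ (Fin d) → EuclideanSpace ℝ (Fin d))
    (g : ℝ × EuclideanSpace ℝ (Fin d) × X → EuclideanSpace ℝ (Fin d))
    (hameas : Measurable a) (hgmeas : Measurable g)
    (κ : ℝ) (hκ : 0 < κ)
    (hcoer : ∀ s ∈ Icc (0:ℝ) T, ∀ y : EuclideanSpace ℝ (Fin d),
      2 * ⟪a (s, y), y⟫ ≤ κ * (1 + ‖y‖ ^ 2))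
    (ψ : ℝ × X → ℝ) (hψmeas : Measurable ψ) (hψnonneg : ∀ p, 0 ≤ ψ p)
    (hf : ∫⁻ s in Icc (0:ℝ) T,
        ∫⁻ v, gNorm0 d g s v * ENNReal.ofReal |ψ (s, v) - 1| ∂ν < ⊤)
    (x₀ : EuclideanSpace ℝ (Fin d)) (x : ℝ → EuclideanSpace ℝ (Fin d))
    (hxcont : ContinuousOn x (Icc 0 T))
    (hxeq : ∀ t ∈ Icc (0:ℝ) T,
      x t = x₀ + (∫ s in (0:ℝ)..t, a (s, x s))
          + ∫ s in (0:ℝ)..t, ∫ v, (ψ (s, v) - 1) • g (s, x s, v) ∂ν) :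
    ∀ t ∈ Icc (0:ℝ) T,
      ‖x t‖ ^ 2 ≤
        (‖x₀‖ ^ 2 + κ * T +
            2 * (∫⁻ s in Icc (0:ℝ) T,
                ∫⁻ v, gNorm0 d g s v * ENNReal.ofReal |ψ (s, v) - 1| ∂ν).toReal) *
          Real.exp (κ * T +
            4 * (∫⁻ s in Icc (0:ℝ) T,
                ∫⁻ v, gNorm0 d g s v * ENNReal.ofReal |ψ (s, v) - 1| ∂ν).toReal) :=
  apriori_bound_controlled_equation_general T hT d ν a g hgmeas κ hκ hcoer ψ hψmeas hf x₀ x hxcont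
    hxeq
end

section
/- Let T > 0, let X be a locally compact Polish space, let ν be a Borel measure on X that is finite on compact sets, and let ν_T = λ_T ⊗ ν on [0,T] × X, where λ_T is Lebesgue measure on [0,T]. Fix N ∈ ℕ, a compact set K ⊆ X, and a measurable function h : [0,T] × X → ℝ such that ∫_{[0,T]×K} e^{L·|h(s,v)|} ν_T(ds dv) < ∞ for every L > 0. Then for any sequence (g_n) in S^N, lim_{M → ∞} sup_n ∫_{([0,T]×K) ∩ {|h| ≥ M}} |h(s,v)|·g_n(s,v) ν_T(ds dv) = 0. -/
open MeasureTheory Set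
open scoped ENNReal

/-- `ν_T = λ_T ⊗ ν` on `[0,T] × X`. -/
noncomputable def nuT {X : Type*} [MeasurableSpace X] (T : ℝ) (ν : Measure X) :
    Measure (ℝ × X) := (volume.restrict (Icc 0 T)).prod ν

/-!
Young's inequality for the conjugate pair `exp` and `ell` gives, for every `L > 0`,
`L·|h|·g ≤ e^{L|h|} + ell g`, and on `{|h| ≥ M}` one has `e^{L|h|} ≤ e^{-LM} e^{2L|h|}`.
Integrating, `L · ∫_{{|h| ≥ M}} |h| g_n ≤ e^{-LM} ∫ e^{2L|h|} + N` uniformly in `n`; letting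
`M → ∞` and then `L → ∞` gives the claim.
-/

@[fun_prop]
lemma measurable_ell : Measurable ell := by
  unfold ell
  fun_prop

lemma mul_le_exp_add_ell (x : ℝ) {y : ℝ} (hy : 0 ≤ y) : x * y ≤ Real.exp x + ell y := by
  rcases hy.eq_or_lt with rfl | hy
  · simp only [ell, mul_zero, sub_zero]
    positivity
  · have key := Real.add_one_le_exp (x - Real.log y)
    rw [Real.exp_sub, Real.exp_log hy] at key
    have hdiv : y * (Real.exp x / y) = Real.exp x := by field_simp
    unfold ell
    nlinarith [mul_le_mul_of_nonneg_left key hy.le]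

lemma mul_mul_le_exp_mul_exp_add_ell {L M a y : ℝ} (hL : 0 ≤ L) (ha : M ≤ a) (hy : 0 ≤ y) :
    L * (a * y) ≤ Real.exp (-(L * M)) * Real.exp (2 * L * a) + ell y := by
  have hexp : Real.exp (L * a) ≤ Real.exp (-(L * M)) * Real.exp (2 * L * a) := by
    rw [← Real.exp_add, Real.exp_le_exp]
    nlinarith
  calc L * (a * y) = (L * a) * y := by ring
    _ ≤ Real.exp (L * a) + ell y := mul_le_exp_add_ell _ hy
    _ ≤ _ := by gcongr

lemma ofReal_mul_setLIntegral_abs_mul_le {α : Type*} [MeasurableSpace α] {μ : Measure α}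
    {f g : α → ℝ} (hf : Measurable f) (hg : Measurable g) (hg_nonneg : ∀ p, 0 ≤ g p)
    {L : ℝ} (hL : 0 ≤ L) (M : ℝ) (s : Set α) :
    ENNReal.ofReal L * ∫⁻ p in s ∩ {p | M ≤ |f p|}, ENNReal.ofReal (|f p| * g p) ∂μ ≤
      ENNReal.ofReal (Real.exp (-(L * M))) *
          ∫⁻ p in s, ENNReal.ofReal (Real.exp (2 * L * |f p|)) ∂μ +
        ∫⁻ p, ENNReal.ofReal (ell (g p)) ∂μ := by
  set e := ENNReal.ofReal (Real.exp (-(L * M))) with he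
  have hexp_meas : Measurable fun p => e * ENNReal.ofReal (Real.exp (2 * L * |f p|)) := by
    fun_prop
  calc ENNReal.ofReal L * ∫⁻ p in s ∩ {p | M ≤ |f p|}, ENNReal.ofReal (|f p| * g p) ∂μ
      = ∫⁻ p in s ∩ {p | M ≤ |f p|}, ENNReal.ofReal (L * (|f p| * g p)) ∂μ := by
        simp_rw [ENNReal.ofReal_mul hL]
        exact (lintegral_const_mul' _ _ ENNReal.ofReal_ne_top).symm
    _ ≤ ∫⁻ p in s ∩ {p | M ≤ |f p|},
          e * ENNReal.ofReal (Real.exp (2 * L * |f p|)) + ENNReal.ofReal (ell (g p)) ∂μ := by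
        refine setLIntegral_mono (hexp_meas.add (by fun_prop)) fun p hp => ?_
        rw [he, ← ENNReal.ofReal_mul (Real.exp_nonneg _)]
        exact (ENNReal.ofReal_le_ofReal
          (mul_mul_le_exp_mul_exp_add_ell hL hp.2 (hg_nonneg p))).trans ENNReal.ofReal_add_le
    _ = e * ∫⁻ p in s ∩ {p | M ≤ |f p|}, ENNReal.ofReal (Real.exp (2 * L * |f p|)) ∂μ +
          ∫⁻ p in s ∩ {p | M ≤ |f p|}, ENNReal.ofReal (ell (g p)) ∂μ := by
        rw [lintegral_add_left hexp_meas, lintegral_const_mul' _ _ ENNReal.ofReal_ne_top]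
    _ ≤ _ := by
        gcongr
        · exact inter_subset_left
        · exact Measure.restrict_le_self

theorem uniform_truncation_vanishing_general
    (T : ℝ)
    {X : Type*}
    [MeasurableSpace X]
    (ν : Measure X)
    (N : ℕ) (K : Set X)
    (h : ℝ × X → ℝ) (hmeas : Measurable h)
    (hexpK : ∀ L : ℝ, 0 < L →
      ∫⁻ p in (univ : Set ℝ) ×ˢ K, ENNReal.ofReal (Real.exp (L * |h p|)) ∂(nuT T ν) < ⊤)
    (gn : ℕ → ℝ × X → ℝ)
    (hgnmeas : ∀ n, Measurable (gn n)) (hgnnonneg : ∀ n p, 0 ≤ gn n p)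
    (hgnS : ∀ n, ∫⁻ p, ENNReal.ofReal (ell (gn n p)) ∂(nuT T ν) ≤ (N : ℝ≥0∞)) :
    Filter.Tendsto
      (fun M : ℝ => ⨆ n : ℕ,
        ∫⁻ p in ((univ : Set ℝ) ×ˢ K) ∩ {p : ℝ × X | M ≤ |h p|},
          ENNReal.ofReal (|h p| * gn n p) ∂(nuT T ν))
      Filter.atTop (nhds 0) := by
  rw [ENNReal.tendsto_nhds_zero]
  intro ε hε
  obtain ⟨L, hLε⟩ := ENNReal.exists_nat_mul_gt hε.ne' (b := N + 1) (by simp)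
  have hL : (0 : ℝ) < L := by
    rcases L.eq_zero_or_pos with rfl | hL
    · simp at hLε
    · exact_mod_cast hL
  set C := ∫⁻ p in (univ : Set ℝ) ×ˢ K, ENNReal.ofReal (Real.exp (2 * L * |h p|)) ∂(nuT T ν)
  have hC : C ≠ ⊤ := (hexpK (2 * L) (by positivity)).ne
  have hdecay : Filter.Tendsto (fun M : ℝ => ENNReal.ofReal (Real.exp (-(L * M))) * C)
      Filter.atTop (nhds 0) := by
    have hexp := Real.tendsto_exp_neg_atTop_nhds_zero.comp
      (Filter.tendsto_id.const_mul_atTop hL)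
    simpa using ENNReal.Tendsto.mul_const (ENNReal.tendsto_ofReal hexp) (Or.inr hC)
  filter_upwards [hdecay.eventually (ge_mem_nhds one_pos)] with M hM
  refine iSup_le fun n => le_of_lt (lt_of_mul_lt_mul_left' (a := (L : ℝ≥0∞)) ?_)
  calc (L : ℝ≥0∞) * _
      ≤ ENNReal.ofReal (Real.exp (-(L * M))) * C + N := by
        simpa using (ofReal_mul_setLIntegral_abs_mul_le hmeas (hgnmeas n) (hgnnonneg n)
          hL.le M _).trans (by gcongr; exact hgnS n)
    _ ≤ N + 1 := by rw [add_comm]; gcongr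
    _ < L * ε := hLε

/-- Uniform (over a sequence in `S^N`) vanishing of the contribution of
large values of `h` on `[0,T] × K`:
`lim_{M → ∞} sup_n ∫_{([0,T]×K) ∩ {|h| ≥ M}} |h|·g_n dν_T = 0`. -/
theorem uniform_truncation_vanishing
    (T : ℝ) (hT : 0 < T)
    {X : Type*} [TopologicalSpace X] [PolishSpace X] [LocallyCompactSpace X]
    [MeasurableSpace X] [BorelSpace X]
    (ν : Measure X) [IsFiniteMeasureOnCompacts ν]
    (N : ℕ) (K : Set X) (hK : IsCompact K)
    (h : ℝ × X → ℝ) (hmeas : Measurable h)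
    (hexpK : ∀ L : ℝ, 0 < L →
      ∫⁻ p in (univ : Set ℝ) ×ˢ K, ENNReal.ofReal (Real.exp (L * |h p|)) ∂(nuT T ν) < ⊤)
    (gn : ℕ → ℝ × X → ℝ)
    (hgnmeas : ∀ n, Measurable (gn n)) (hgnnonneg : ∀ n p, 0 ≤ gn n p)
    (hgnS : ∀ n, ∫⁻ p, ENNReal.ofReal (ell (gn n p)) ∂(nuT T ν) ≤ (N : ℝ≥0∞)) :
    Filter.Tendsto
      (fun M : ℝ => ⨆ n : ℕ,
        ∫⁻ p in ((univ : Set ℝ) ×ˢ K) ∩ {p : ℝ × X | M ≤ |h p|},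
          ENNReal.ofReal (|h p| * gn n p) ∂(nuT T ν))
      Filter.atTop (nhds 0) :=
  uniform_truncation_vanishing_general T ν N K h hmeas hexpK gn hgnmeas hgnnonneg hgnS
end

section
/- Let T > 0, let X be a locally compact Polish space, let ν be a Borel measure on X that is finite on compact sets, let ν_T = λ_T ⊗ ν on [0,T] × X, and fix a compact set K ⊆ X. Fix N ∈ ℕ and let g_n, g ∈ S^N with ∫_{[0,T]×K} g dν_T ≠ 0 and ∫_{[0,T]×K} g_n dν_T ≠ 0 for all n, and suppose that for every bounded continuous function f : [0,T] × K → ℝ, ∫_{[0,T]×K} f·g_n dν_T → ∫_{[0,T]×K} f·g dν_T as n → ∞. Then for every bounded measurable function h : [0,T] × K → ℝ, ∫_{[0,T]×K} h·g_n dν_T → ∫_{[0,T]×K} h·g dν_T as n → ∞. -/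
open MeasureTheory Set
open scoped ENNReal

/-!
The entropy bound `∫ ell g ≤ N` makes `S^N` uniformly integrable: since `ell r ≥ r (L - 1)` for
`r ≥ exp L`, the mass of any `g ∈ S^N` above the level `exp L` is at most `N / (L - 1)`.
On the finite measure `ν_T` restricted to `[0,T] × K`, a bounded measurable `h` is `L¹`-close to a
continuous `f` with the same bound `C`, and then
`|∫ (h - f) g| ≤ exp L * ‖h - f‖₁ + 2 C N / (L - 1)` is small for all `g ∈ S^N` at once.
Splitting `∫ h gₙ - ∫ h g` through `∫ f gₙ - ∫ f g` then transfers the convergence from `f`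
to `h`.
-/

open Real
open scoped NNReal

lemma mul_sub_one_le_ell {r L : ℝ} (h : exp L ≤ r) : r * (L - 1) ≤ ell r := by
  have hr : 0 < r := (exp_pos L).trans_le h
  have hlog : L ≤ log r := (le_log_iff_exp_le hr).2 h
  unfold ell
  nlinarith

section Entropy

variable {α : Type*} [MeasurableSpace α] {μ : Measure α} {g : α → ℝ}

lemma setLIntegral_exp_lt_mul_le_lintegral_ell (hg : Measurable g) (L : ℝ) :
    (∫⁻ p in {p | exp L < g p}, ENNReal.ofReal (g p) ∂μ) * ENNReal.ofReal (L - 1) ≤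
      ∫⁻ p, ENNReal.ofReal (ell (g p)) ∂μ := by
  rw [← lintegral_mul_const' _ _ ENNReal.ofReal_ne_top]
  refine le_trans (setLIntegral_mono' (measurableSet_lt measurable_const hg) fun p hp => ?_)
    (setLIntegral_le_lintegral _ _)
  have hp : exp L < g p := hp
  rw [← ENNReal.ofReal_mul ((exp_pos L).trans hp).le]
  exact ENNReal.ofReal_le_ofReal (mul_sub_one_le_ell hp.le)

lemma setIntegral_exp_lt_le_of_lintegral_ell_le (hg : Measurable g) {N : ℝ≥0}
    (hN : ∫⁻ p, ENNReal.ofReal (ell (g p)) ∂μ ≤ N) {L : ℝ} (hL : 1 < L) :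
    ∫ p in {p | exp L < g p}, g p ∂μ ≤ N / (L - 1) := by
  have hL1 : 0 < L - 1 := sub_pos.2 hL
  have hpos : ∀ᵐ p ∂μ.restrict {p | exp L < g p}, 0 ≤ g p :=
    (ae_restrict_mem (measurableSet_lt measurable_const hg)).mono
      fun p hp => ((exp_pos L).trans hp).le
  rw [integral_eq_lintegral_of_nonneg_ae hpos hg.aestronglyMeasurable]
  refine ENNReal.toReal_le_of_le_ofReal (by positivity) ?_
  rw [ENNReal.ofReal_div_of_pos hL1, ENNReal.le_div_iff_mul_le (Or.inl (by simpa using hL1))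
    (Or.inl ENNReal.ofReal_ne_top)]
  exact (setLIntegral_exp_lt_mul_le_lintegral_ell hg L).trans (by simpa using hN)

lemma integrable_of_lintegral_ell_ne_top [IsFiniteMeasure μ] (hg : Measurable g) (hg0 : 0 ≤ g)
    (hN : ∫⁻ p, ENNReal.ofReal (ell (g p)) ∂μ ≠ ∞) : Integrable g μ := by
  have hle : ∀ p, ENNReal.ofReal (g p) ≤ ENNReal.ofReal (exp 2) + ENNReal.ofReal (ell (g p)) := by
    intro p
    rcases le_or_gt (g p) (exp 2) with hp | hp
    · exact le_add_right (ENNReal.ofReal_le_ofReal hp)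
    · refine le_add_left (ENNReal.ofReal_le_ofReal ?_)
      linarith [mul_sub_one_le_ell hp.le]
  refine ⟨hg.aestronglyMeasurable, ?_⟩
  rw [hasFiniteIntegral_iff_ofReal (ae_of_all _ hg0)]
  calc ∫⁻ p, ENNReal.ofReal (g p) ∂μ
      ≤ ∫⁻ p, (ENNReal.ofReal (exp 2) + ENNReal.ofReal (ell (g p))) ∂μ := lintegral_mono hle
    _ = ENNReal.ofReal (exp 2) * μ univ + ∫⁻ p, ENNReal.ofReal (ell (g p)) ∂μ := by
      rw [lintegral_add_left measurable_const, lintegral_const]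
    _ < ∞ := ENNReal.add_lt_top.2 ⟨by finiteness, hN.lt_top⟩

lemma abs_mul_le_add_ite {a r B c : ℝ} (ha : |a| ≤ B) (hr : 0 ≤ r) (hc : 0 ≤ c) :
    |a * r| ≤ c * |a| + B * if c < r then r else 0 := by
  rw [abs_mul, abs_of_nonneg hr]
  split_ifs with h
  · nlinarith [abs_nonneg a]
  · rw [mul_zero, add_zero, mul_comm c]
    exact mul_le_mul_of_nonneg_left (not_lt.1 h) (abs_nonneg a)

theorem abs_integral_mul_le_of_lintegral_ell_le [IsFiniteMeasure μ] {φ : α → ℝ} {B : ℝ}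
    (hφ : AEStronglyMeasurable φ μ) (hB : 0 ≤ B) (hφB : ∀ᵐ p ∂μ, |φ p| ≤ B)
    (hg : Measurable g) (hg0 : 0 ≤ g) {N : ℝ≥0}
    (hN : ∫⁻ p, ENNReal.ofReal (ell (g p)) ∂μ ≤ N) {L : ℝ} (hL : 1 < L) :
    |∫ p, φ p * g p ∂μ| ≤ exp L * ∫ p, |φ p| ∂μ + B * (N / (L - 1)) := by
  set s := {p | exp L < g p}
  have hs : MeasurableSet s := measurableSet_lt measurable_const hg
  have hgi : Integrable g μ :=
    integrable_of_lintegral_ell_ne_top hg hg0 (ne_top_of_le_ne_top ENNReal.coe_ne_top hN)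
  have hφi : Integrable (fun p => |φ p|) μ :=
    (Integrable.of_bound hφ B (by simpa only [Real.norm_eq_abs] using hφB)).abs
  calc |∫ p, φ p * g p ∂μ|
      ≤ ∫ p, |φ p * g p| ∂μ := abs_integral_le_integral_abs
    _ ≤ ∫ p, (exp L * |φ p| + B * s.indicator g p) ∂μ := by
      refine integral_mono_of_nonneg (ae_of_all _ fun p => abs_nonneg _)
        ((hφi.const_mul _).add ((hgi.indicator hs).const_mul B)) (hφB.mono fun p hp => ?_)
      simpa only [s, indicator_apply, mem_ofPred_eq] using
        abs_mul_le_add_ite hp (hg0 p) (exp_pos L).le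
    _ = exp L * ∫ p, |φ p| ∂μ + B * ∫ p in s, g p ∂μ := by
      rw [integral_add (hφi.const_mul _) ((hgi.indicator hs).const_mul B), integral_const_mul,
        integral_const_mul, integral_indicator hs]
    _ ≤ exp L * ∫ p, |φ p| ∂μ + B * (N / (L - 1)) := by
      gcongr
      exact setIntegral_exp_lt_le_of_lintegral_ell_le hg hN hL

end Entropy

section Approximation

variable {α : Type*} [TopologicalSpace α] [NormalSpace α] [MeasurableSpace α] [BorelSpace α]
  {μ : Measure α} [μ.WeaklyRegular]

theorem exists_continuous_abs_le_integral_abs_sub_le {h : α → ℝ} {C : ℝ} (hh : Integrable h μ)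
    (hC : 0 ≤ C) (hhC : ∀ᵐ p ∂μ, |h p| ≤ C) {δ : ℝ} (hδ : 0 < δ) :
    ∃ f : α → ℝ, Continuous f ∧ (∀ p, |f p| ≤ C) ∧ ∫ p, |h p - f p| ∂μ ≤ δ := by
  obtain ⟨f, hhf, hf⟩ := hh.exists_boundedContinuous_integral_sub_le hδ
  have hCC : -C ≤ C := by linarith
  refine ⟨fun p => projIcc (-C) C hCC (f p),
    continuous_subtype_val.comp (continuous_projIcc.comp f.continuous),
    fun p => abs_le.2 (projIcc (-C) C hCC (f p)).2, ?_⟩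
  refine le_trans (integral_mono_of_nonneg (ae_of_all _ fun _ => abs_nonneg _) (hh.sub hf).norm
    (hhC.mono fun p hp => ?_)) hhf
  have hmem : (projIcc (-C) C hCC (h p) : ℝ) = h p :=
    congrArg Subtype.val (projIcc_of_mem hCC (abs_le.1 hp))
  calc |h p - projIcc (-C) C hCC (f p)|
      = |(projIcc (-C) C hCC (h p) : ℝ) - projIcc (-C) C hCC (f p)| := by rw [hmem]
    _ ≤ |h p - f p| := abs_projIcc_sub_projIcc hCC

theorem exists_continuous_forall_abs_integral_mul_sub_le [IsFiniteMeasure μ] {h : α → ℝ} {C : ℝ}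
    (hh : AEStronglyMeasurable h μ) (hC : 0 ≤ C) (hhC : ∀ᵐ p ∂μ, |h p| ≤ C) (N : ℝ≥0) {ε : ℝ}
    (hε : 0 < ε) :
    ∃ f : α → ℝ, Continuous f ∧ (∀ p, |f p| ≤ C) ∧
      ∀ g : α → ℝ, Measurable g → 0 ≤ g → ∫⁻ p, ENNReal.ofReal (ell (g p)) ∂μ ≤ N →
        |∫ p, h p * g p ∂μ - ∫ p, f p * g p ∂μ| ≤ ε := by
  have hhC' : ∀ᵐ p ∂μ, ‖h p‖ ≤ C := by simpa only [Real.norm_eq_abs] using hhC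
  -- chosen so that the tail term `2 C N / (L - 1)` is at most `ε / 2`
  set L := 2 + 4 * C * N / ε
  have hL : 1 < L := by
    have : 0 ≤ 4 * C * N / ε := by positivity
    linarith
  obtain ⟨f, hf, hfC, hhf⟩ := exists_continuous_abs_le_integral_abs_sub_le
    (Integrable.of_bound hh C hhC') hC hhC (δ := ε / (2 * exp L)) (by positivity)
  refine ⟨f, hf, hfC, fun g hg hg0 hN => ?_⟩
  have hgi : Integrable g μ :=
    integrable_of_lintegral_ell_ne_top hg hg0 (ne_top_of_le_ne_top ENNReal.coe_ne_top hN)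
  have hdiff : ∫ p, h p * g p ∂μ - ∫ p, f p * g p ∂μ = ∫ p, (h p - f p) * g p ∂μ := by
    have hfC' : ∀ᵐ p ∂μ, ‖f p‖ ≤ C := ae_of_all _ fun p => (Real.norm_eq_abs _).trans_le (hfC p)
    rw [← integral_sub (hgi.bdd_mul hh hhC') (hgi.bdd_mul hf.aestronglyMeasurable hfC')]
    simp only [sub_mul]
  have hB : ∀ᵐ p ∂μ, |h p - f p| ≤ 2 * C :=
    hhC.mono fun p hp => (abs_sub _ _).trans (by linarith [hfC p])
  have hclose : exp L * ∫ p, |h p - f p| ∂μ ≤ ε / 2 :=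
    calc exp L * ∫ p, |h p - f p| ∂μ ≤ exp L * (ε / (2 * exp L)) := by gcongr
      _ = ε / 2 := by field_simp
  have htail : 2 * C * (N / (L - 1)) ≤ ε / 2 := by
    have hL' : ε / 2 * (L - 1) = ε / 2 + 2 * C * N := by simp only [L]; field_simp; ring
    rw [← mul_div_assoc, div_le_iff₀ (by linarith)]
    nlinarith [NNReal.coe_nonneg N]
  rw [hdiff]
  linarith [abs_integral_mul_le_of_lintegral_ell_le (φ := fun p => h p - f p)
    (hh.sub hf.aestronglyMeasurable) (by positivity) hB hg hg0 hN hL]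

end Approximation

lemma nuT_restrict_univ_prod {X : Type*} [MeasurableSpace X] {ν : Measure X} [SFinite ν]
    {K : Set X} (hK : MeasurableSet K) (T : ℝ) :
    (nuT T ν).restrict (univ ×ˢ K) = ((volume : Measure ℝ).prod ν).restrict (Icc 0 T ×ˢ K) := by
  rw [nuT, ← Measure.restrict_univ (μ := ν), Measure.prod_restrict,
    Measure.restrict_restrict (MeasurableSet.univ.prod hK), prod_inter_prod, univ_inter,
    inter_univ, Measure.restrict_univ]

theorem convergence_extends_to_bounded_measurable_general
    (T : ℝ)
    {X : Type*} [TopologicalSpace X] [PolishSpace X] [LocallyCompactSpace X]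
    [MeasurableSpace X] [BorelSpace X]
    (ν : Measure X) [IsFiniteMeasureOnCompacts ν]
    (N : ℕ) (K : Set X) (hK : IsCompact K)
    (gn : ℕ → ℝ × X → ℝ) (g : ℝ × X → ℝ)
    (hgnmeas : ∀ n, Measurable (gn n)) (hgmeas : Measurable g)
    (hgnnonneg : ∀ n p, 0 ≤ gn n p) (hgnonneg : ∀ p, 0 ≤ g p)
    (hgnS : ∀ n, ∫⁻ p, ENNReal.ofReal (ell (gn n p)) ∂(nuT T ν) ≤ (N : ℝ≥0∞))
    (hgS : ∫⁻ p, ENNReal.ofReal (ell (g p)) ∂(nuT T ν) ≤ (N : ℝ≥0∞))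
    (hconv : ∀ f : ℝ × X → ℝ, ContinuousOn f (Icc 0 T ×ˢ K) →
      (∃ C : ℝ, ∀ p ∈ Icc (0:ℝ) T ×ˢ K, |f p| ≤ C) →
      Filter.Tendsto (fun n => ∫ p in (univ : Set ℝ) ×ˢ K, f p * gn n p ∂(nuT T ν))
        Filter.atTop (nhds (∫ p in (univ : Set ℝ) ×ˢ K, f p * g p ∂(nuT T ν)))) :
    ∀ h : ℝ × X → ℝ, Measurable h → (∃ C : ℝ, ∀ p ∈ Icc (0:ℝ) T ×ˢ K, |h p| ≤ C) →
      Filter.Tendsto (fun n => ∫ p in (univ : Set ℝ) ×ˢ K, h p * gn n p ∂(nuT T ν))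
        Filter.atTop (nhds (∫ p in (univ : Set ℝ) ×ˢ K, h p * g p ∂(nuT T ν))) := by
  rintro h hh ⟨C, hC⟩
  set μ := (nuT T ν).restrict (univ ×ˢ K)
  have hμ : μ = ((volume : Measure ℝ).prod ν).restrict (Icc 0 T ×ˢ K) :=
    nuT_restrict_univ_prod hK.measurableSet T
  have : IsFiniteMeasure μ :=
    hμ ▸ isFiniteMeasure_restrict.2 (isCompact_Icc.prod hK).measure_lt_top.ne
  have hhC : ∀ᵐ p ∂μ, |h p| ≤ max C 0 := hμ ▸
    (ae_restrict_mem (measurableSet_Icc.prod hK.measurableSet)).mono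
      fun p hp => (hC p hp).trans (le_max_left _ _)
  have hS : ∀ g' : ℝ × X → ℝ, ∫⁻ p, ENNReal.ofReal (ell (g' p)) ∂(nuT T ν) ≤ N →
      ∫⁻ p, ENNReal.ofReal (ell (g' p)) ∂μ ≤ ((N : ℝ≥0) : ℝ≥0∞) := fun g' hg' =>
    (setLIntegral_le_lintegral _ _).trans (by simpa using hg')
  refine Metric.tendsto_atTop.2 fun ε hε => ?_
  obtain ⟨f, hf, hfC, hfg⟩ := exists_continuous_forall_abs_integral_mul_sub_le
    hh.aestronglyMeasurable (le_max_right C 0) hhC N (ε := ε / 4) (by positivity)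
  obtain ⟨n₀, hn₀⟩ := Metric.tendsto_atTop.1
    (hconv f hf.continuousOn ⟨_, fun p _ => hfC p⟩) (ε / 4) (by positivity)
  refine ⟨n₀, fun n hn => ?_⟩
  have hgn := abs_le.1 (hfg (gn n) (hgnmeas n) (hgnnonneg n) (hS _ (hgnS n)))
  have hg := abs_le.1 (hfg g hgmeas hgnonneg (hS _ hgS))
  have hfn := abs_lt.1 (Real.dist_eq _ _ ▸ hn₀ n hn)
  rw [Real.dist_eq, abs_lt]
  constructor <;> linarith [hgn.1, hgn.2, hg.1, hg.2, hfn.1, hfn.2]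

/-- If `g_n, g ∈ S^N` have nonzero mass on `[0,T] × K` and
`∫_{[0,T]×K} f·g_n dν_T → ∫_{[0,T]×K} f·g dν_T` for every bounded continuous `f` on
`[0,T] × K`, then the same convergence holds for every bounded measurable `h` on
`[0,T] × K`. -/
theorem convergence_extends_to_bounded_measurable
    (T : ℝ) (hT : 0 < T)
    {X : Type*} [TopologicalSpace X] [PolishSpace X] [LocallyCompactSpace X]
    [MeasurableSpace X] [BorelSpace X]
    (ν : Measure X) [IsFiniteMeasureOnCompacts ν]
    (N : ℕ) (K : Set X) (hK : IsCompact K)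
    (gn : ℕ → ℝ × X → ℝ) (g : ℝ × X → ℝ)
    (hgnmeas : ∀ n, Measurable (gn n)) (hgmeas : Measurable g)
    (hgnnonneg : ∀ n p, 0 ≤ gn n p) (hgnonneg : ∀ p, 0 ≤ g p)
    (hgnS : ∀ n, ∫⁻ p, ENNReal.ofReal (ell (gn n p)) ∂(nuT T ν) ≤ (N : ℝ≥0∞))
    (hgS : ∫⁻ p, ENNReal.ofReal (ell (g p)) ∂(nuT T ν) ≤ (N : ℝ≥0∞))
    (hgne : ∫ p in (univ : Set ℝ) ×ˢ K, g p ∂(nuT T ν) ≠ 0)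
    (hgnne : ∀ n, ∫ p in (univ : Set ℝ) ×ˢ K, gn n p ∂(nuT T ν) ≠ 0)
    (hconv : ∀ f : ℝ × X → ℝ, ContinuousOn f (Icc 0 T ×ˢ K) →
      (∃ C : ℝ, ∀ p ∈ Icc (0:ℝ) T ×ˢ K, |f p| ≤ C) →
      Filter.Tendsto (fun n => ∫ p in (univ : Set ℝ) ×ˢ K, f p * gn n p ∂(nuT T ν))
        Filter.atTop (nhds (∫ p in (univ : Set ℝ) ×ˢ K, f p * g p ∂(nuT T ν)))) :
    ∀ h : ℝ × X → ℝ, Measurable h → (∃ C : ℝ, ∀ p ∈ Icc (0:ℝ) T ×ˢ K, |h p| ≤ C) →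
      Filter.Tendsto (fun n => ∫ p in (univ : Set ℝ) ×ˢ K, h p * gn n p ∂(nuT T ν))
        Filter.atTop (nhds (∫ p in (univ : Set ℝ) ×ˢ K, h p * g p ∂(nuT T ν))) :=
  convergence_extends_to_bounded_measurable_general T ν N K hK gn g hgnmeas hgmeas hgnnonneg
    hgnonneg hgnS hgS hconv
end

section
/- Let D > 0, V > 0, l > 0, and set c = V/(2D). Define φ_0(x) = √(2c/(1 − e^{−2cl})) and, for j ≥ 1, φ_j(x) = √(2/l)·e^{c·x}·sin((jπ/l)·x + α_j) with α_j = arctan(−jπ/(l·c)). Then the family {φ_j}_{j ≥ 0} is orthonormal in L²([0,l], ρ), where ρ(dx) = e^{−2cx} dx; that is, ∫_0^l φ_i(x)·φ_j(x)·e^{−2cx} dx = 1 if i = j and = 0 if i ≠ j, for all i, j ≥ 0. -/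
/-!
Multiplying by `e^{-cx}` turns the weighted inner product into the plain one on `[0, l]`:
`u_j = e^{-cx} φ_j` is `√(2c/(1 - e^{-2cl})) e^{-cx}` for `j = 0` and `√(2/l) sin(k_j x + α_j)`,
`k_j = jπ/l`, otherwise. Each `u_j` solves `u'' = -μ_j u` with the Robin condition `u' = -c u`
at both ends, where `μ_0 = -c²` and `μ_j = k_j²`: at `0` this is `tan α_j = -k_j/c`, and at `l`
the phase has moved by `jπ`. The eigenvalues are distinct, so Lagrange's identity
`(μ_j - μ_i) ∫ u_i u_j = [u_i' u_j - u_i u_j']₀ˡ`, whose right side vanishes under a common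
Robin condition, gives orthogonality; the normalisations are direct integrals.
-/

open Real Set

theorem sub_mul_integral_mul_eq_wronskian_sub {u u' v v' : ℝ → ℝ} {μ ν a b : ℝ}
    (hu : ∀ x ∈ uIcc a b, HasDerivAt u (u' x) x)
    (hu' : ∀ x ∈ uIcc a b, HasDerivAt u' (-μ * u x) x)
    (hv : ∀ x ∈ uIcc a b, HasDerivAt v (v' x) x)
    (hv' : ∀ x ∈ uIcc a b, HasDerivAt v' (-ν * v x) x) :
    (ν - μ) * ∫ x in a..b, u x * v x =
      (u' b * v b - u b * v' b) - (u' a * v a - u a * v' a) := by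
  have hW : ∀ x ∈ uIcc a b, HasDerivAt (fun x => u' x * v x - u x * v' x)
      ((ν - μ) * (u x * v x)) x := fun x hx =>
    (((hu' x hx).mul (hv x hx)).sub ((hu x hx).mul (hv' x hx))).congr_deriv (by ring)
  have hcont : ContinuousOn (fun x => (ν - μ) * (u x * v x)) (uIcc a b) := fun x hx =>
    ((hu x hx).continuousAt.mul (hv x hx).continuousAt).const_mul _ |>.continuousWithinAt
  rw [← intervalIntegral.integral_const_mul,
    intervalIntegral.integral_eq_sub_of_hasDerivAt hW hcont.intervalIntegrable]

def IsRobinEigenfunction (ha hb a b μ : ℝ) (u : ℝ → ℝ) : Prop :=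
  ∃ u' : ℝ → ℝ, (∀ x ∈ uIcc a b, HasDerivAt u (u' x) x) ∧
    (∀ x ∈ uIcc a b, HasDerivAt u' (-μ * u x) x) ∧ u' a = ha * u a ∧ u' b = hb * u b

namespace IsRobinEigenfunction

variable {ha hb a b μ ν : ℝ} {u v : ℝ → ℝ}

theorem const_mul (hu : IsRobinEigenfunction ha hb a b μ u) (C : ℝ) :
    IsRobinEigenfunction ha hb a b μ (fun x => C * u x) := by
  obtain ⟨u', hu, hu', hua, hub⟩ := hu
  refine ⟨fun x => C * u' x, fun x hx => (hu x hx).const_mul C,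
    fun x hx => ((hu' x hx).const_mul C).congr_deriv (by ring), ?_, ?_⟩
  · simp only [hua]; ring
  · simp only [hub]; ring

theorem integral_mul_eq_zero (hu : IsRobinEigenfunction ha hb a b μ u)
    (hv : IsRobinEigenfunction ha hb a b ν v) (hμν : μ ≠ ν) :
    ∫ x in a..b, u x * v x = 0 := by
  obtain ⟨u', hu, hu', hua, hub⟩ := hu
  obtain ⟨v', hv, hv', hva, hvb⟩ := hv
  have h := sub_mul_integral_mul_eq_wronskian_sub hu hu' hv hv'
  rw [hua, hub, hva, hvb] at h
  exact (mul_eq_zero.mp (h.trans (by ring))).resolve_left (sub_ne_zero.mpr hμν.symm)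

theorem integral_mul_eq_ite {ι : Type*} [DecidableEq ι] {μ : ι → ℝ} {u : ι → ℝ → ℝ}
    (hu : ∀ i, IsRobinEigenfunction ha hb a b (μ i) (u i)) (hμ : Function.Injective μ)
    (hnorm : ∀ i, ∫ x in a..b, u i x ^ 2 = 1) (i j : ι) :
    ∫ x in a..b, u i x * u j x = if i = j then 1 else 0 := by
  split_ifs with hij
  · simpa [hij, ← sq] using hnorm j
  · exact (hu i).integral_mul_eq_zero (hu j) (hμ.ne hij)

end IsRobinEigenfunction

theorem isRobinEigenfunction_exp_neg_mul (c a b : ℝ) :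
    IsRobinEigenfunction (-c) (-c) a b (-c ^ 2) (fun x => exp (-c * x)) := by
  have hexp : ∀ x, HasDerivAt (fun x => exp (-c * x)) (-c * exp (-c * x)) x := fun x =>
    (((hasDerivAt_id x).const_mul (-c)).exp).congr_deriv (by simp only [id, mul_one]; ring)
  exact ⟨fun x => -c * exp (-c * x), fun x _ => hexp x,
    fun x _ => ((hexp x).const_mul (-c)).congr_deriv (by ring), rfl, rfl⟩

theorem isRobinEigenfunction_sin_mul_add {c k α l : ℝ} (n : ℕ)
    (hα : k * cos α = -c * sin α) (hkl : k * l = n * π) :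
    IsRobinEigenfunction (-c) (-c) 0 l (k ^ 2) (fun x => sin (k * x + α)) := by
  have hθ : ∀ x, HasDerivAt (fun x => k * x + α) k x := fun x =>
    (((hasDerivAt_id x).const_mul k).add_const α).congr_deriv (by simp)
  refine ⟨fun x => k * cos (k * x + α), fun x _ => ((hθ x).sin).congr_deriv (by ring),
    fun x _ => (((hθ x).cos).const_mul k).congr_deriv (by ring), ?_, ?_⟩
  · simpa only [mul_zero, zero_add] using hα
  · simp only [hkl, add_comm _ α, sin_add_nat_mul_pi, cos_add_nat_mul_pi]
    linear_combination (-1) ^ n * hα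

theorem mul_cos_arctan_neg_div {c : ℝ} (hc : c ≠ 0) (k : ℝ) :
    k * cos (arctan (-k / c)) = -c * sin (arctan (-k / c)) := by
  rw [← tan_mul_cos (cos_arctan_pos _).ne', tan_arctan]
  field_simp

theorem integral_exp_neg_mul_sq {c : ℝ} (hc : c ≠ 0) (l : ℝ) :
    ∫ x in (0:ℝ)..l, exp (-c * x) ^ 2 = (1 - exp (-2 * c * l)) / (2 * c) := by
  have h (x : ℝ) : exp (-c * x) ^ 2 = exp (-2 * c * x) := by rw [← exp_nat_mul]; ring_nf
  simp_rw [h]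
  rw [intervalIntegral.integral_comp_mul_left (fun x => exp x) (by simpa using hc),
    integral_exp, mul_zero, exp_zero, smul_eq_mul]
  field_simp
  ring

theorem integral_sin_mul_add_sq {k α l : ℝ} (hk : k ≠ 0) (n : ℕ) (hkl : k * l = n * π) :
    ∫ x in (0:ℝ)..l, sin (k * x + α) ^ 2 = l / 2 := by
  rw [intervalIntegral.integral_comp_mul_add (fun x => sin x ^ 2) hk, integral_sin_sq,
    mul_zero, zero_add, hkl, add_comm _ α, sin_add_nat_mul_pi, cos_add_nat_mul_pi]
  have hsign : (-1 : ℝ) ^ n * (-1) ^ n = 1 := by rw [← mul_pow]; norm_num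
  have hl : l = n * π / k := by rw [← hkl]; field_simp
  rw [smul_eq_mul, hl]
  linear_combination -(k⁻¹ * (sin α * cos α) / 2) * hsign

noncomputable section RobinModes

variable {c l : ℝ}

def robinEigenvalue (c l : ℝ) (j : ℕ) : ℝ :=
  if j = 0 then -c ^ 2 else (j * π / l) ^ 2

def robinEigenfunction (c l : ℝ) (j : ℕ) (x : ℝ) : ℝ :=
  if j = 0 then √(2 * c / (1 - exp (-2 * c * l))) * exp (-c * x)
  else √(2 / l) * sin (j * π / l * x + arctan (-(j * π) / (l * c)))

theorem strictMono_robinEigenvalue (hc : c ≠ 0) (hl : 0 < l) :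
    StrictMono (robinEigenvalue c l) := strictMono_nat_of_lt_succ fun j => by
  rcases eq_or_ne j 0 with rfl | hj
  · simp only [robinEigenvalue, if_true, zero_add, if_neg one_ne_zero]
    exact (neg_neg_of_pos (by positivity)).trans_le (sq_nonneg _)
  · simp only [robinEigenvalue, if_neg hj, if_neg j.succ_ne_zero]
    gcongr
    simp

theorem isRobinEigenfunction_robinEigenfunction (hc : c ≠ 0) (hl : l ≠ 0) (j : ℕ) :
    IsRobinEigenfunction (-c) (-c) 0 l (robinEigenvalue c l j) (robinEigenfunction c l j) := by
  rcases eq_or_ne j 0 with rfl | hj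
  · exact (isRobinEigenfunction_exp_neg_mul c 0 l).const_mul _
  · have hkl : j * π / l * l = j * π := by field_simp
    have hα := mul_cos_arctan_neg_div hc (j * π / l)
    rw [show -(j * π / l) / c = -(j * π) / (l * c) by ring] at hα
    unfold robinEigenfunction robinEigenvalue
    simpa only [if_neg hj] using
      (isRobinEigenfunction_sin_mul_add j hα hkl).const_mul (√(2 / l))

theorem integral_robinEigenfunction_sq (hc : 0 < c) (hl : 0 < l) (j : ℕ) :
    ∫ x in (0:ℝ)..l, robinEigenfunction c l j x ^ 2 = 1 := by
  rcases eq_or_ne j 0 with rfl | hj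
  · have hE : 0 < 1 - exp (-2 * c * l) := sub_pos.mpr (exp_lt_one_iff.mpr (by nlinarith))
    simp_rw [robinEigenfunction, if_true, mul_pow, intervalIntegral.integral_const_mul,
      integral_exp_neg_mul_sq hc.ne']
    rw [sq_sqrt (by positivity), div_mul_div_comm, mul_comm, div_self (by positivity)]
  · have hkl : j * π / l * l = j * π := by field_simp
    simp_rw [robinEigenfunction, if_neg hj, mul_pow, intervalIntegral.integral_const_mul,
      integral_sin_mul_add_sq (by positivity) j hkl]
    rw [sq_sqrt (by positivity)]
    field_simp

end RobinModes

/-- With `c = V/(2D)`, the family `φ_0 = √(2c/(1 − e^{−2cl}))` and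
`φ_j(x) = √(2/l)·e^{cx}·sin((jπ/l)x + α_j)` (`j ≥ 1`, `α_j = arctan(−jπ/(lc))`) is
orthonormal in `L²([0,l], ρ)` with `ρ(dx) = e^{−2cx} dx`:
`∫₀ˡ φ_i φ_j e^{−2cx} dx = δ_{ij}`. -/
theorem neumann_eigenfunctions_orthonormal
    (D V l : ℝ) (hD : 0 < D) (hV : 0 < V) (hl : 0 < l)
    (c : ℝ) (hc : c = V / (2 * D))
    (α : ℕ → ℝ)
    (hα : ∀ j : ℕ, α j = Real.arctan (-((j : ℝ) * Real.pi) / (l * c)))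
    (φ : ℕ → ℝ → ℝ)
    (hφ0 : ∀ x : ℝ, φ 0 x = Real.sqrt (2 * c / (1 - Real.exp (-2 * c * l))))
    (hφ : ∀ j : ℕ, 1 ≤ j → ∀ x : ℝ,
      φ j x = Real.sqrt (2 / l) * Real.exp (c * x) *
        Real.sin ((j : ℝ) * Real.pi / l * x + α j)) :
    ∀ i j : ℕ,
      (∫ x in (0:ℝ)..l, φ i x * φ j x * Real.exp (-2 * c * x)) =
        if i = j then 1 else 0 := by
  have hc0 : 0 < c := hc ▸ by positivity
  have hexp (x : ℝ) : exp (c * x) * exp (-c * x) = 1 := by rw [← exp_add]; simp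
  have hφu (j : ℕ) (x : ℝ) : φ j x = exp (c * x) * robinEigenfunction c l j x := by
    rcases eq_or_ne j 0 with rfl | hj
    · simp only [robinEigenfunction, if_true, hφ0]
      linear_combination -√(2 * c / (1 - exp (-2 * c * l))) * hexp x
    · simp only [robinEigenfunction, if_neg hj, hφ j (Nat.one_le_iff_ne_zero.mpr hj), hα]
      ring
  intro i j
  have hweight (x : ℝ) : φ i x * φ j x * exp (-2 * c * x) =
      robinEigenfunction c l i x * robinEigenfunction c l j x := by
    rw [hφu, hφu, show -2 * c * x = -c * x + -c * x by ring, exp_add]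
    linear_combination robinEigenfunction c l i x * robinEigenfunction c l j x *
      (exp (c * x) * exp (-c * x) + 1) * hexp x
  simp_rw [hweight]
  exact IsRobinEigenfunction.integral_mul_eq_ite
    (isRobinEigenfunction_robinEigenfunction hc0.ne' hl.ne')
    (strictMono_robinEigenvalue hc0.ne' hl).injective (integral_robinEigenfunction_sq hc0 hl) i j
end
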